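/- arXiv:2204.01557 — 4 statements merged into one kernel-verified Lean document; each statement's English description precedes it below -/
import Mathlib

section
/- For every free filter F on ω, the space N_F has the Josefson–Nissenzweig property if and only if N_F contains a non-trivial convergent sequence (i.e., a sequence of pairwise distinct points of N_F converging to a point of N_F). -/
open Filter Topology

noncomputable section

/-- The topology of the space `N_F = ω ∪ {p_F}` on `Option α`, where `none` plays the
role of the point `p_F`: every `some a` is isolated, and neighborhoods of `none`
are the sets `A ∪ {p_F}` with `A ∈ F`. -/
def NFtop {α : Type*} (F : Filter α) : TopologicalSpace (Option α) where
  IsOpen U := none ∈ U → {a : α | some a ∈ U} ∈ F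
  isOpen_univ := fun _ => Filter.univ_mem
  isOpen_inter := fun U V hU hV h => F.inter_sets (hU h.1) (hV h.2)
  isOpen_sUnion := fun S hS h => by
    obtain ⟨U, hU, hnU⟩ := h
    exact Filter.mem_of_superset (hS U hU hnU) fun a ha => ⟨U, hU, ha⟩

/-- The norm `‖μ‖ = Σ |α_i|` of a finitely supported signed measure. -/
def mnorm {X : Type*} (μ : X →₀ ℝ) : ℝ := ∑ x ∈ μ.support, |μ x|

/-- The integral `μ(f) = Σ α_i f(x_i)`. -/
def mIntg {X : Type*} (μ : X →₀ ℝ) (f : X → ℝ) : ℝ := ∑ x ∈ μ.support, μ x * f x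

/-- The norm of the restriction `μ ↾ A`. -/
def mnormOn {X : Type*} (μ : X →₀ ℝ) (A : Set X) : ℝ :=
  ∑ x ∈ μ.support, Set.indicator A (fun y => |μ y|) x

/-- The value `μ(A)` of a finitely supported signed measure on a set. -/
def msetOf {X : Type*} (μ : X →₀ ℝ) (A : Set X) : ℝ :=
  ∑ x ∈ μ.support, Set.indicator A (fun y => μ y) x

/-- A JN-sequence on `X` (with topology `t`). -/
def IsJNSeq {X : Type*} (t : TopologicalSpace X) (μ : ℕ → (X →₀ ℝ)) : Prop :=
  (∀ n, mnorm (μ n) = 1) ∧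
  ∀ f : X → ℝ, @Continuous X ℝ t _ f →
    Tendsto (fun n => mIntg (μ n) f) atTop (nhds 0)

/-- A BJN-sequence on `X` (with topology `t`). -/
def IsBJNSeq {X : Type*} (t : TopologicalSpace X) (μ : ℕ → (X →₀ ℝ)) : Prop :=
  (∀ n, mnorm (μ n) = 1) ∧
  ∀ f : X → ℝ, @Continuous X ℝ t _ f → (∃ C : ℝ, ∀ x, |f x| ≤ C) →
    Tendsto (fun n => mIntg (μ n) f) atTop (nhds 0)

/-- The Josefson–Nissenzweig property. -/
def JNP {X : Type*} (t : TopologicalSpace X) : Prop := ∃ μ, IsJNSeq t μ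

/-- The bounded Josefson–Nissenzweig property. -/
def BJNP {X : Type*} (t : TopologicalSpace X) : Prop := ∃ μ, IsBJNSeq t μ

/-- A free filter: a proper filter containing all cofinite sets. -/
def IsFreeFilter {α : Type*} (F : Filter α) : Prop := F.NeBot ∧ F ≤ Filter.cofinite

/-- Katětov preorder: `F ≤_K G`. -/
def KatetovLE (F G : Filter ℕ) : Prop := ∃ f : ℕ → ℕ, ∀ A ∈ F, f ⁻¹' A ∈ G

section auxlemmas

variable {F : Filter ℕ}

lemma isOpen_NFtop_iff {U : Set (Option ℕ)} :
    IsOpen[NFtop F] U ↔ (none ∈ U → {a : ℕ | some a ∈ U} ∈ F) := Iff.rfl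

lemma cont_null (F : Filter ℕ) (g : Option ℕ → ℝ) (A : Set ℕ) (hA : A ∈ F)
    (h0 : g none = 0) (hg : ∀ a ∈ A, g (some a) = 0) :
    @Continuous _ _ (NFtop F) _ g := by
  rw [continuous_def]
  intro V hV
  show none ∈ g ⁻¹' V → {a : ℕ | some a ∈ g ⁻¹' V} ∈ F
  intro hn
  refine Filter.mem_of_superset hA fun a ha => ?_
  show g (some a) ∈ V
  rw [hg a ha, ← h0]
  exact hn

lemma tendsto_pointmass {μ : ℕ → (Option ℕ →₀ ℝ)} (hF : IsFreeFilter F)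
    (hμ : IsJNSeq (NFtop F) μ) (a : ℕ) :
    Tendsto (fun n => μ n (some a)) atTop (nhds 0) := by
  have hcompl : {b : ℕ | b ≠ a}ᶜ = {a} := by ext b; simp
  have hA : {b : ℕ | b ≠ a} ∈ F := by
    refine hF.2 ?_
    rw [Filter.mem_cofinite, hcompl]
    exact Set.finite_singleton a
  set χ : Option ℕ → ℝ := fun y => if y = some a then 1 else 0 with hχ
  have hc : @Continuous _ _ (NFtop F) _ χ := by
    refine cont_null F χ _ hA (by simp [hχ]) (fun b hb => ?_)
    have : some b ≠ some a := fun h => hb (Option.some_injective _ h)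
    simp [hχ, this]
  have h2 := hμ.2 χ hc
  refine h2.congr fun n => ?_
  simp only [mIntg, hχ, mul_ite, mul_one, mul_zero]
  rw [Finset.sum_ite_eq' (μ n).support (some a) (fun y => μ n y)]
  by_cases hmem : some a ∈ (μ n).support
  · rw [if_pos hmem]
  · rw [if_neg hmem, Finsupp.notMem_support_iff.mp hmem]

lemma tendsto_totalmass {μ : ℕ → (Option ℕ →₀ ℝ)}
    (hμ : IsJNSeq (NFtop F) μ) :
    Tendsto (fun n => ∑ y ∈ (μ n).support, μ n y) atTop (nhds 0) := by
  have h := hμ.2 (fun _ => 1) (@continuous_const _ _ (NFtop F) _ _)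
  refine h.congr fun n => ?_
  simp [mIntg]

lemma mem_nhds_none_NFtop {s : Set (Option ℕ)} (hs : s ∈ @nhds _ (NFtop F) none) :
    {a : ℕ | some a ∈ s} ∈ F := by
  letI : TopologicalSpace (Option ℕ) := NFtop F
  rcases mem_nhds_iff.mp hs with ⟨t, hts, hto, hnt⟩
  exact Filter.mem_of_superset ((isOpen_NFtop_iff.mp hto) hnt) fun a ha => hts ha

end auxlemmas

lemma jnp_of_seq (F : Filter ℕ) (x : ℕ → Option ℕ)
    (hinj : Function.Injective x) (p : Option ℕ)
    (hx : Tendsto x atTop (@nhds _ (NFtop F) p)) : JNP (NFtop F) := by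
  letI : TopologicalSpace (Option ℕ) := NFtop F
  have hpn : p = none := by
    by_contra hp
    obtain ⟨m, rfl⟩ : ∃ m, p = some m := Option.ne_none_iff_exists'.mp hp
    have hop : IsOpen ({some m} : Set (Option ℕ)) := by
      rw [isOpen_NFtop_iff]
      intro h
      simp at h
    have hmem : ({some m} : Set (Option ℕ)) ∈ @nhds _ (NFtop F) (some m) :=
      hop.mem_nhds rfl
    obtain ⟨N, hN⟩ := Filter.eventually_atTop.mp (hx.eventually (Filter.eventually_mem_set.mpr hmem))
    have h1 : x N = some m := hN N le_rfl
    have h2 : x (N + 1) = some m := hN (N + 1) (Nat.le_succ N)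
    have := hinj (h1.trans h2.symm)
    omega
  subst hpn
  have hne : ∃ N, ∀ n, N ≤ n → x n ≠ none := by
    by_cases h : ∃ n₀, x n₀ = none
    · obtain ⟨n₀, hn₀⟩ := h
      refine ⟨n₀ + 1, fun n hn hc => ?_⟩
      have := hinj (hc.trans hn₀.symm)
      omega
    · exact ⟨0, fun n _ hc => h ⟨n, hc⟩⟩
  obtain ⟨N, hN⟩ := hne
  have hxne : ∀ n, x (n + N) ≠ none := fun n => hN _ (Nat.le_add_left N n)
  refine ⟨fun n => ⟨{x (n + N), none},
    fun y => if y = x (n + N) then 1/2 else if y = none then -(1/2) else 0, ?_⟩, ?_, ?_⟩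
  · intro y
    show y ∈ ({x (n + N), none} : Finset (Option ℕ)) ↔
      (if y = x (n + N) then (1:ℝ)/2 else if y = none then -(1/2) else 0) ≠ 0
    by_cases h1 : y = x (n + N)
    · subst h1
      simp only [if_pos rfl, Finset.mem_insert]
      norm_num
    · by_cases h2 : y = none
      · subst h2
        rw [if_neg h1, if_pos rfl]
        simp only [Finset.mem_insert, Finset.mem_singleton]
        norm_num [h1]
      · rw [if_neg h1, if_neg h2]
        simp [h1, h2]
  · intro n
    show ∑ y ∈ ({x (n + N), none} : Finset (Option ℕ)),
      |if y = x (n + N) then (1:ℝ)/2 else if y = none then -(1/2) else 0| = 1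
    rw [Finset.sum_pair (hxne n)]
    rw [if_pos rfl, if_neg (Ne.symm (hxne n)), if_pos rfl, abs_neg,
      abs_of_nonneg (by norm_num : (0:ℝ) ≤ 1/2)]
    norm_num
  · intro f hf
    have h1 : Tendsto (fun n => f (x (n + N))) atTop (nhds (f none)) :=
      ((hf.tendsto none).comp hx).comp (tendsto_add_atTop_nat N)
    have h2 : Tendsto (fun n => (1/2 : ℝ) * f (x (n + N)) + -(1/2) * f none) atTop
        (nhds ((1/2 : ℝ) * f none + -(1/2) * f none)) :=
      (h1.const_mul _).add_const _
    rw [show (1/2 : ℝ) * f none + -(1/2) * f none = 0 by ring] at h2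
    refine h2.congr fun n => ?_
    show (1/2 : ℝ) * f (x (n + N)) + -(1/2) * f none = ∑ y ∈ ({x (n + N), none} : Finset (Option ℕ)),
      (if y = x (n + N) then (1:ℝ)/2 else if y = none then -(1/2) else 0) * f y
    rw [Finset.sum_pair (hxne n)]
    rw [if_pos rfl, if_neg (Ne.symm (hxne n)), if_pos rfl]

lemma seq_of_jnp (F : Filter ℕ) (hF : IsFreeFilter F) (hJ : JNP (NFtop F)) :
    ∃ (x : ℕ → Option ℕ) (p : Option ℕ), Function.Injective x ∧
      Tendsto x atTop (@nhds _ (NFtop F) p) := by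
  classical
  obtain ⟨μ, hμ⟩ := hJ
  by_contra hno
  push_neg at hno
  set U : Set ℕ := {a | ∃ n, some a ∈ (μ n).support} with hUdef
  rcases Set.finite_or_infinite U with hUf | hUi
  · -- finite case
    set K := hUf.toFinset with hK
    have hsub : ∀ n, (μ n).support ⊆ insert none (K.image some) := by
      intro n y hy
      match y with
      | none => exact Finset.mem_insert_self _ _
      | some a =>
        refine Finset.mem_insert_of_mem (Finset.mem_image_of_mem some ?_)
        exact hUf.mem_toFinset.mpr ⟨n, hy⟩
    have hnone_notmem : (none : Option ℕ) ∉ K.image some := by simp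
    have hsomeinj : ∀ a ∈ K, ∀ b ∈ K, (some a : Option ℕ) = some b → a = b :=
      fun a _ b _ h => Option.some_injective _ h
    have h1 : Tendsto (fun n => ∑ a ∈ K, μ n (some a)) atTop (nhds 0) := by
      have := tendsto_finset_sum K (fun a (_ : a ∈ K) => tendsto_pointmass hF hμ a)
      simpa using this
    have h2 : Tendsto (fun n => μ n none) atTop (nhds 0) := by
      have h3 : ∀ n, μ n none = (∑ y ∈ (μ n).support, μ n y) - ∑ a ∈ K, μ n (some a) := by
        intro n
        have he : ∑ y ∈ (μ n).support, μ n y = ∑ y ∈ insert none (K.image some), μ n y :=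
          Finset.sum_subset (hsub n) (fun y _ hy => Finsupp.notMem_support_iff.mp hy)
        rw [he, Finset.sum_insert hnone_notmem, Finset.sum_image hsomeinj]
        ring
      have h4 := (tendsto_totalmass hμ).sub h1
      rw [sub_zero] at h4
      exact h4.congr (fun n => (h3 n).symm)
    have h5 : Tendsto (fun n => |μ n none| + ∑ a ∈ K, |μ n (some a)|) atTop (nhds 0) := by
      have ha := h2.abs
      rw [abs_zero] at ha
      have hb : Tendsto (fun n => ∑ a ∈ K, |μ n (some a)|) atTop (nhds 0) := by
        have hc := tendsto_finset_sum K
          (fun a (_ : a ∈ K) => ((tendsto_pointmass hF hμ a).abs))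
        simpa using hc
      simpa using ha.add hb
    have h6 : ∀ n, (1:ℝ) ≤ |μ n none| + ∑ a ∈ K, |μ n (some a)| := by
      intro n
      have h7 : mnorm (μ n) ≤ ∑ y ∈ insert none (K.image some), |μ n y| :=
        Finset.sum_le_sum_of_subset_of_nonneg (hsub n) (fun y _ _ => abs_nonneg _)
      rw [hμ.1 n] at h7
      rwa [Finset.sum_insert hnone_notmem, Finset.sum_image hsomeinj] at h7
    obtain ⟨n, hn⟩ := (h5.eventually (gt_mem_nhds (by norm_num : (0:ℝ) < 1))).exists
    exact absurd (h6 n) (not_le.mpr hn)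
  · -- infinite case
    set u : ℕ ↪ U := hUi.natEmbedding U with hu
    set x : ℕ → Option ℕ := fun n => some ((u n : ℕ)) with hxdef
    have huinj : Function.Injective (fun n => ((u n : ℕ))) :=
      fun a b h => u.injective (Subtype.coe_injective h)
    have hxinj : Function.Injective x :=
      fun a b h => huinj (Option.some_injective _ h)
    have hT := hno x none hxinj
    rw [tendsto_def] at hT
    push_neg at hT
    obtain ⟨s, hs, hsn⟩ := hT
    have hA : {a : ℕ | some a ∈ s} ∈ F := mem_nhds_none_NFtop hs
    have hfreq : {n : ℕ | x n ∉ s}.Infinite := by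
      rw [← Nat.frequently_atTop_iff_infinite]
      rw [Filter.mem_atTop_sets] at hsn
      push_neg at hsn
      rw [Filter.frequently_atTop]
      intro N
      obtain ⟨n, hn1, hn2⟩ := hsn N
      exact ⟨n, hn1, hn2⟩
    set E : Set ℕ := {a | a ∈ U ∧ some a ∉ s} with hEdef
    have hE : E.Infinite := by
      have himg : ((fun n => ((u n : ℕ))) '' {n | x n ∉ s}).Infinite :=
        hfreq.image (huinj.injOn)
      refine himg.mono ?_
      rintro a ⟨n, hn, rfl⟩
      exact ⟨(u n).2, hn⟩
    set P : ℕ × ℕ → Prop := fun q => q.2 ∈ E ∧ some q.2 ∈ (μ q.1).support ∧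
      ∀ m < q.1, some q.2 ∉ (μ m).support with hPdef
    set r : ℕ × ℕ → ℕ × ℕ → Prop := fun q q' => q.1 < q'.1 ∧
      |μ q'.1 (some q.2)| ≤ |μ q.1 (some q.2)| * (1/2)^q.1 / 8 with hrdef
    have hstep : ∀ t : Finset (ℕ × ℕ), (∀ q ∈ t, P q) → ∃ q', P q' ∧ ∀ q ∈ t, r q q' := by
      intro t ht
      have hev : ∀ᶠ m in atTop,
          ∀ q ∈ t, q.1 < m ∧ |μ m (some q.2)| ≤ |μ q.1 (some q.2)| * (1/2)^q.1 / 8 := by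
        rw [Filter.eventually_all_finset]
        intro q hq
        have hβ : 0 < |μ q.1 (some q.2)| :=
          abs_pos.mpr (Finsupp.mem_support_iff.mp (ht q hq).2.1)
        have hb : 0 < |μ q.1 (some q.2)| * (1/2)^q.1 / 8 := by positivity
        have h1 : ∀ᶠ m in atTop,
            |μ m (some q.2)| < |μ q.1 (some q.2)| * (1/2)^q.1 / 8 := by
          have h0 := (tendsto_pointmass hF hμ q.2).abs
          rw [abs_zero] at h0
          exact h0.eventually (gt_mem_nhds hb)
        filter_upwards [h1, Filter.eventually_gt_atTop q.1] with m hm1 hm2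
        exact ⟨hm2, le_of_lt hm1⟩
      obtain ⟨N, hN⟩ := Filter.eventually_atTop.mp hev
      have hBfin : (⋃ m ∈ Set.Iio N, {a : ℕ | some a ∈ (μ m).support}).Finite := by
        refine Set.Finite.biUnion (Set.finite_Iio N) (fun m _ => ?_)
        have : {a : ℕ | some a ∈ (μ m).support} = some ⁻¹' ((μ m).support : Set (Option ℕ)) := rfl
        rw [this]
        exact Set.Finite.preimage ((Option.some_injective ℕ).injOn)
          (μ m).support.finite_toSet
      obtain ⟨a, haE, haB⟩ := (hE.diff hBfin).nonempty
      have hex : ∃ n, some a ∈ (μ n).support := haE.1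
      set n' := Nat.find hex with hn'
      have hn's : some a ∈ (μ n').support := Nat.find_spec hex
      have hn'min : ∀ m < n', some a ∉ (μ m).support := fun m hm => Nat.find_min hex hm
      have hn'N : N ≤ n' := by
        by_contra hlt
        push_neg at hlt
        exact haB (Set.mem_biUnion hlt hn's)
      exact ⟨(n', a), ⟨haE, hn's, hn'min⟩, fun q hq => hN n' hn'N q hq⟩
    obtain ⟨f, hfP, hfr⟩ := exists_seq_of_forall_finset_exists P r hstep
    set nn : ℕ → ℕ := fun k => (f k).1 with hnn
    set xx : ℕ → ℕ := fun k => (f k).2 with hxx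
    have hmono : StrictMono nn := fun j k h => (hfr j k h).1
    have hsup : ∀ k, some (xx k) ∈ (μ (nn k)).support := fun k => (hfP k).2.1
    have hEmem : ∀ k, xx k ∈ E := fun k => (hfP k).1
    have hnot : ∀ j k, j < k → some (xx k) ∉ (μ (nn j)).support :=
      fun j k h => (hfP k).2.2 (nn j) (hmono h)
    have hxxinj : Function.Injective xx := by
      intro j k h
      by_contra hne
      rcases lt_or_gt_of_ne hne with hlt | hgt
      · exact hnot j k hlt (by rw [← h]; exact hsup j)
      · exact hnot k j hgt (by rw [h]; exact hsup k)
    set c : ℕ → ℝ := fun k => (μ (nn k) (some (xx k)))⁻¹ with hc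
    set g : Option ℕ → ℝ :=
      fun y => y.elim 0 (fun a => if hx : ∃ k, xx k = a then c hx.choose else 0) with hg
    have hgnone : g none = 0 := rfl
    have hgval : ∀ k, g (some (xx k)) = c k := by
      intro k
      have hx : ∃ j, xx j = xx k := ⟨k, rfl⟩
      show (if hx : ∃ j, xx j = xx k then c hx.choose else 0) = c k
      rw [dif_pos hx]
      exact congrArg c (hxxinj hx.choose_spec)
    have hgzero : ∀ a, (¬ ∃ k, xx k = a) → g (some a) = 0 := by
      intro a ha
      show (if hx : ∃ k, xx k = a then c hx.choose else 0) = 0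
      rw [dif_neg ha]
    have hgc : @Continuous _ _ (NFtop F) _ g := by
      refine cont_null F g {a | some a ∈ s} hA hgnone ?_
      intro a ha
      refine hgzero a ?_
      rintro ⟨k, rfl⟩
      exact (hEmem k).2 ha
    have hints : ∀ k, (3/4 : ℝ) ≤ mIntg (μ (nn k)) g := by
      intro k
      set ν := μ (nn k) with hν
      set T : Finset (Option ℕ) := (Finset.range (k+1)).image (fun j => some (xx j)) with hT
      have hTinj : ∀ j1 ∈ Finset.range (k+1), ∀ j2 ∈ Finset.range (k+1),
          (some (xx j1) : Option ℕ) = some (xx j2) → j1 = j2 :=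
        fun j1 _ j2 _ h => hxxinj (Option.some_injective _ h)
      have e1 : mIntg ν g = ∑ y ∈ ν.support ∪ T, ν y * g y := by
        refine Finset.sum_subset Finset.subset_union_left (fun y _ hy => ?_)
        rw [Finsupp.notMem_support_iff.mp hy, zero_mul]
      have e2 : ∑ y ∈ ν.support ∪ T, ν y * g y = ∑ y ∈ T, ν y * g y := by
        refine (Finset.sum_subset Finset.subset_union_right (fun y hyu hyT => ?_)).symm
        rcases Finset.mem_union.mp hyu with hysupp | hyT'
        · match y with
          | none => rw [hgnone, mul_zero]
          | some a =>
            by_cases hxk : ∃ j, xx j = a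
            · obtain ⟨j, rfl⟩ := hxk
              have hjk : k < j := by
                by_contra hle
                push_neg at hle
                exact hyT (Finset.mem_image.mpr ⟨j, Finset.mem_range.mpr (Nat.lt_succ_of_le hle), rfl⟩)
              exact absurd hysupp (hnot k j hjk)
            · rw [hgzero a hxk, mul_zero]
        · exact absurd hyT' hyT
      have e3 : ∑ y ∈ T, ν y * g y = ∑ j ∈ Finset.range (k+1), ν (some (xx j)) * c j := by
        rw [hT, Finset.sum_image hTinj]
        exact Finset.sum_congr rfl (fun j _ => by rw [hgval j])
      have hterm : ν (some (xx k)) * c k = 1 := by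
        have hne0 := Finsupp.mem_support_iff.mp (hsup k)
        exact mul_inv_cancel₀ hne0
      have herr : |∑ j ∈ Finset.range k, ν (some (xx j)) * c j| ≤ 1/4 := by
        calc |∑ j ∈ Finset.range k, ν (some (xx j)) * c j|
            ≤ ∑ j ∈ Finset.range k, |ν (some (xx j)) * c j| :=
              Finset.abs_sum_le_sum_abs _ _
          _ ≤ ∑ j ∈ Finset.range k, (1/2 : ℝ)^j * (1/8) := by
              refine Finset.sum_le_sum (fun j hj => ?_)
              have hjk := Finset.mem_range.mp hj
              have hb := (hfr j k hjk).2
              have hβ : 0 < |μ (nn j) (some (xx j))| :=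
                abs_pos.mpr (Finsupp.mem_support_iff.mp (hsup j))
              rw [abs_mul]
              have hcj : |c j| = |μ (nn j) (some (xx j))|⁻¹ := by
                rw [hc]; exact abs_inv _
              rw [hcj]
              have hstep1 : |ν (some (xx j))| * |μ (nn j) (some (xx j))|⁻¹ ≤
                  (|μ (nn j) (some (xx j))| * (1/2)^(nn j) / 8) * |μ (nn j) (some (xx j))|⁻¹ :=
                mul_le_mul_of_nonneg_right hb (by positivity)
              refine hstep1.trans ?_
              have heq : (|μ (nn j) (some (xx j))| * (1/2 : ℝ)^(nn j) / 8) *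
                  |μ (nn j) (some (xx j))|⁻¹ = (1/2)^(nn j) * (1/8) := by
                field_simp
              rw [heq]
              refine mul_le_mul_of_nonneg_right ?_ (by norm_num)
              exact pow_le_pow_of_le_one (by norm_num) (by norm_num) (hmono.le_apply)
          _ = (∑ j ∈ Finset.range k, (1/2 : ℝ)^j) * (1/8) := by
              rw [Finset.sum_mul]
          _ ≤ 2 * (1/8) :=
              mul_le_mul_of_nonneg_right (sum_geometric_two_le k) (by norm_num)
          _ = 1/4 := by norm_num
      have hfin : mIntg ν g = (∑ j ∈ Finset.range k, ν (some (xx j)) * c j) + 1 := by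
        rw [e1, e2, e3, Finset.sum_range_succ, hterm]
      rw [hfin]
      have hlow := neg_le_of_abs_le herr
      linarith
    have htend := (hμ.2 g hgc).comp hmono.tendsto_atTop
    have habs := htend.abs
    rw [abs_zero] at habs
    obtain ⟨k, hk⟩ := (habs.eventually (gt_mem_nhds (by norm_num : (0:ℝ) < 3/4))).exists
    have h1 := hints k
    have h2 : mIntg (μ (nn k)) g ≤ |mIntg (μ (nn k)) g| := le_abs_self _
    simp only [Function.comp] at hk
    linarith

/-- For every free filter `F` on `ω`, the space `N_F` has the JNP if and only if
`N_F` contains a non-trivial convergent sequence. -/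
theorem stmt0 (F : Filter ℕ) (hF : IsFreeFilter F) :
    JNP (NFtop F) ↔
      ∃ (x : ℕ → Option ℕ) (p : Option ℕ), Function.Injective x ∧
        Tendsto x atTop (@nhds _ (NFtop F) p) := by
  constructor
  · exact fun hJ => seq_of_jnp F hF hJ
  · rintro ⟨x, p, hinj, hx⟩
    exact jnp_of_seq F x hinj p hx
end
end

section
/- Let F be a free filter on ω. Then N_F has the bounded Josefson–Nissenzweig property if and only if there is a sequence (μ_n) of finitely supported probability measures on N_F such that (1) supp(μ_n) ⊆ ω for every n ∈ ω, and (2) lim_{n→∞} μ_n(A) = 1 for every A ∈ F. -/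
open Filter Topology

noncomputable section

lemma sum_support_eq {X : Type*} (μ : X →₀ ℝ) (s : Finset X) (hs : μ.support ⊆ s)
    (G : X → ℝ) (hG : ∀ x, μ x = 0 → G x = 0) :
    ∑ x ∈ μ.support, G x = ∑ x ∈ s, G x :=
  Finset.sum_subset hs (fun x _ hx => hG x (Finsupp.notMem_support_iff.mp hx))

-- continuity criterion

lemma cont_of {F : Filter ℕ} {A : Set ℕ} (hA : A ∈ F) (g : Option ℕ → ℝ)
    (h0 : g none = 0) (hz : ∀ a ∈ A, g (some a) = 0) :
    @Continuous (Option ℕ) ℝ (NFtop F) _ g := by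
  rw [continuous_def]
  intro s hs
  intro hns
  have h0s : (0:ℝ) ∈ s := by rwa [← h0]
  refine Filter.mem_of_superset hA (fun a ha => ?_)
  show g (some a) ∈ s
  rw [hz a ha]; exact h0s

-- continuity at `none` : neighborhoods

lemma cont_nbhd {F : Filter ℕ} (f : Option ℕ → ℝ)
    (hf : @Continuous (Option ℕ) ℝ (NFtop F) _ f) {ε : ℝ} (hε : 0 < ε) :
    {a : ℕ | |f (some a) - f none| < ε} ∈ F := by
  have := (continuous_def.mp hf) (Metric.ball (f none) ε) Metric.isOpen_ball
  have h := this (by simp [Metric.mem_ball, hε, Set.mem_preimage])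
  refine Filter.mem_of_superset h ?_
  intro a ha
  simp only [Set.mem_setOf_eq, Set.mem_preimage, Metric.mem_ball, Real.dist_eq] at *
  exact ha

lemma real_mul_sign (r : ℝ) : r * Real.sign r = |r| := by
  rcases lt_trichotomy r 0 with h | h | h
  · rw [Real.sign_of_neg h, abs_of_neg h]; ring
  · simp [h]
  · rw [Real.sign_of_pos h, abs_of_pos h]; ring

lemma abs_sign_le_one (r : ℝ) : |Real.sign r| ≤ 1 := by
  rcases lt_trichotomy r 0 with h | h | h
  · rw [Real.sign_of_neg h]; norm_num
  · simp [h]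
  · rw [Real.sign_of_pos h]; norm_num

lemma gliding {X : Type*} (μ : ℕ → (X →₀ ℝ)) (B : Set X)
    (htest : ∀ g : X → ℝ, (∀ x, |g x| ≤ 1) → (∀ x, x ∉ B → g x = 0) →
      Tendsto (fun n => mIntg (μ n) g) atTop (nhds 0)) :
    Tendsto (fun n => mnormOn (μ n) B) atTop (nhds 0) := by
  classical
  set κ : ℕ → ℝ := fun n => mnormOn (μ n) B with hκ
  have hκ0 : ∀ n, 0 ≤ κ n := by
    intro n
    refine Finset.sum_nonneg (fun x _ => ?_)
    by_cases h : x ∈ B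
    · rw [Set.indicator_of_mem h]; exact abs_nonneg _
    · rw [Set.indicator_of_notMem h]
  -- pointwise convergence from singleton tests
  have hpt : ∀ x ∈ B, Tendsto (fun n => μ n x) atTop (nhds 0) := by
    intro x hx
    have := htest (fun y => if y = x then 1 else 0)
      (fun y => by split <;> norm_num)
      (fun y hy => by
        by_cases h : y = x
        · exact absurd (h ▸ hx) hy
        · simp [h])
    have heq : ∀ n, mIntg (μ n) (fun y => if y = x then 1 else 0) = μ n x := by
      intro n
      unfold mIntg
      rw [Finset.sum_congr rfl (fun y _ => by
        show μ n y * (if y = x then (1:ℝ) else 0) = if y = x then μ n y else 0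
        split <;> simp)]
      rw [Finset.sum_ite_eq' (μ n).support x (fun y => μ n y)]
      split
      · rfl
      · exact (Finsupp.notMem_support_iff.mp (by assumption)).symm
    exact this.congr heq
  -- finite-set sums tend to 0
  have hfin : ∀ T : Finset X,
      Tendsto (fun n => ∑ x ∈ T, Set.indicator B (fun y => |μ n y|) x) atTop (nhds 0) := by
    intro T
    have : Tendsto (fun n => ∑ x ∈ T, Set.indicator B (fun y => |μ n y|) x) atTop
        (nhds (∑ x ∈ T, 0)) := by
      refine tendsto_finset_sum _ (fun x _ => ?_)
      by_cases h : x ∈ B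
      · simp only [Set.indicator_of_mem h]
        simpa using (hpt x h).abs
      · simp only [Set.indicator_of_notMem h]
        exact tendsto_const_nhds
    simpa using this
  by_contra hcon
  -- extract ε and frequent large norms
  rw [Metric.tendsto_atTop] at hcon
  push_neg at hcon
  obtain ⟨ε, hε, hfreq⟩ := hcon
  have hfreq' : ∀ N, ∃ n ≥ N, ε ≤ κ n := by
    intro N
    obtain ⟨n, hn, h⟩ := hfreq N
    exact ⟨n, hn, by rwa [Real.dist_eq, sub_zero, abs_of_nonneg (hκ0 n)] at h⟩
  -- next-index existence
  have hnext : ∀ (m : ℕ) (T : Finset X), ∃ n, m < n ∧ ε ≤ κ n ∧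
      ∑ x ∈ T, Set.indicator B (fun y => |μ n y|) x ≤ ε/5 := by
    intro m T
    have := (hfin T).eventually (eventually_le_nhds (show (0:ℝ) < ε/5 by linarith))
    rw [eventually_atTop] at this
    obtain ⟨N₀, hN₀⟩ := this
    obtain ⟨n, hn, h⟩ := hfreq' (max (m+1) N₀)
    exact ⟨n, lt_of_lt_of_le (Nat.lt_succ_self m)
        (le_trans (le_max_left _ _) hn), h, hN₀ n (le_trans (le_max_right _ _) hn)⟩
  choose nf hnf1 hnf2 hnf3 using hnext
  -- the recursive state
  set st : ℕ → ℕ × Finset X := fun j => Nat.rec ((0 : ℕ), (∅ : Finset X))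
    (fun _ s => (nf s.1 s.2, s.2 ∪ (μ (nf s.1 s.2)).support)) j with hst
  set n : ℕ → ℕ := fun j => nf (st j).1 (st j).2 with hn
  have hst1 : ∀ j, (st (j+1)).1 = n j := fun j => rfl
  have hst2 : ∀ j, (st (j+1)).2 = (st j).2 ∪ (μ (n j)).support := fun j => rfl
  have hmono : StrictMono n := by
    refine strictMono_nat_of_lt_succ (fun j => ?_)
    have := hnf1 (st (j+1)).1 (st (j+1)).2
    rwa [hst1 j] at this
  have hsub : ∀ i j, i < j → (μ (n i)).support ⊆ (st j).2 := by
    intro i j hij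
    induction j with
    | zero => omega
    | succ j ih =>
      rw [hst2 j]
      rcases Nat.lt_succ_iff_lt_or_eq.mp hij with h | h
      · exact (ih h).trans Finset.subset_union_left
      · subst h; exact Finset.subset_union_right
  -- the test function
  set g : X → ℝ := fun x =>
    if hx : x ∈ B ∧ ∃ i, x ∈ (μ (n i)).support
    then Real.sign (μ (n (Nat.find hx.2)) x) else 0 with hg
  have hgb : ∀ x, |g x| ≤ 1 := by
    intro x
    rw [hg]
    dsimp only
    split
    · exact abs_sign_le_one _
    · norm_num
  have hgz : ∀ x, x ∉ B → g x = 0 := by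
    intro x hx
    rw [hg]
    dsimp only
    split
    · next h => exact absurd h.1 hx
    · rfl
  -- key lower bound
  have hkey : ∀ j, (3*ε)/5 ≤ mIntg (μ (n j)) g := by
    intro j
    set s := (μ (n j)).support with hs
    set T := (st j).2 with hT
    have hBg : mIntg (μ (n j)) g = ∑ x ∈ s.filter (fun x => x ∈ B), μ (n j) x * g x := by
      unfold mIntg
      rw [Finset.sum_filter]
      refine Finset.sum_congr rfl (fun x _ => ?_)
      split
      · rfl
      · next h => rw [hgz x h, mul_zero]
    have hκeq : κ (n j) = ∑ x ∈ s.filter (fun x => x ∈ B), |μ (n j) x| := by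
      rw [hκ]
      unfold mnormOn
      rw [Finset.sum_filter]
      refine Finset.sum_congr rfl (fun x _ => ?_)
      by_cases h : x ∈ B
      · rw [Set.indicator_of_mem h, if_pos h]
      · rw [Set.indicator_of_notMem h, if_neg h]
    set sB := s.filter (fun x => x ∈ B) with hsB
    -- split by membership in T
    have hsplit := Finset.sum_filter_add_sum_filter_not sB (fun x => x ∈ T)
      (fun x => μ (n j) x * g x)
    have hterm1 : ∀ x ∈ sB.filter (fun x => x ∉ T), μ (n j) x * g x = |μ (n j) x| := by
      intro x hx
      rw [Finset.mem_filter] at hx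
      obtain ⟨hxsB, hxT⟩ := hx
      rw [Finset.mem_filter] at hxsB
      obtain ⟨hxs, hxB⟩ := hxsB
      have hex : ∃ i, x ∈ (μ (n i)).support := ⟨j, hxs⟩
      have hgx : g x = Real.sign (μ (n (Nat.find (show ∃ i, x ∈ (μ (n i)).support from hex))) x) := by
        rw [hg]
        dsimp only
        rw [dif_pos (⟨hxB, hex⟩ : x ∈ B ∧ ∃ i, x ∈ (μ (n i)).support)]
      have hfind : Nat.find hex = j := by
        have hle : Nat.find hex ≤ j := Nat.find_le hxs
        rcases lt_or_eq_of_le hle with h | h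
        · exact absurd (hsub _ j h (Nat.find_spec hex)) hxT
        · exact h
      rw [hgx]
      -- the proofs of the existential might differ; use proof irrelevance via congr
      have : Nat.find (show ∃ i, x ∈ (μ (n i)).support from hex) = j := hfind
      rw [this, real_mul_sign]
    have hterm2 : ∀ x ∈ sB.filter (fun x => x ∈ T), -(|μ (n j) x|) ≤ μ (n j) x * g x := by
      intro x _
      calc -(|μ (n j) x|) ≤ -(|μ (n j) x * g x|) := by
            rw [neg_le_neg_iff, abs_mul]
            calc |μ (n j) x| * |g x| ≤ |μ (n j) x| * 1 :=
                  mul_le_mul_of_nonneg_left (hgb x) (abs_nonneg _)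
              _ = |μ (n j) x| := mul_one _
        _ ≤ μ (n j) x * g x := neg_abs_le _
    have hTbound : ∑ x ∈ sB.filter (fun x => x ∈ T), |μ (n j) x| ≤ ε/5 := by
      have h1 : ∑ x ∈ sB.filter (fun x => x ∈ T), |μ (n j) x|
          = ∑ x ∈ sB.filter (fun x => x ∈ T), Set.indicator B (fun y => |μ (n j) y|) x := by
        refine Finset.sum_congr rfl (fun x hx => ?_)
        rw [Finset.mem_filter] at hx
        have hxB : x ∈ B := (Finset.mem_filter.mp hx.1).2
        rw [Set.indicator_of_mem hxB]
      have h2 : sB.filter (fun x => x ∈ T) ⊆ T := by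
        intro x hx
        exact (Finset.mem_filter.mp hx).2
      have h3 : ∑ x ∈ sB.filter (fun x => x ∈ T), Set.indicator B (fun y => |μ (n j) y|) x
          ≤ ∑ x ∈ T, Set.indicator B (fun y => |μ (n j) y|) x := by
        refine Finset.sum_le_sum_of_subset_of_nonneg h2 (fun x _ _ => ?_)
        by_cases h : x ∈ B
        · rw [Set.indicator_of_mem h]; exact abs_nonneg _
        · rw [Set.indicator_of_notMem h]
      have h4 : ∑ x ∈ T, Set.indicator B (fun y => |μ (n j) y|) x ≤ ε/5 :=
        hnf3 (st j).1 (st j).2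
      exact h1 ▸ (h3.trans h4)
    have hεj : ε ≤ κ (n j) := hnf2 (st j).1 (st j).2
    -- put together
    have e1 : ∑ x ∈ sB.filter (fun x => x ∉ T), μ (n j) x * g x
        = ∑ x ∈ sB.filter (fun x => x ∉ T), |μ (n j) x| :=
      Finset.sum_congr rfl hterm1
    have e2 : ∑ x ∈ sB.filter (fun x => x ∉ T), |μ (n j) x|
        = κ (n j) - ∑ x ∈ sB.filter (fun x => x ∈ T), |μ (n j) x| := by
      rw [hκeq]
      have := Finset.sum_filter_add_sum_filter_not sB (fun x => x ∈ T)
        (fun x => |μ (n j) x|)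
      linarith
    have e3 : -(ε/5) ≤ ∑ x ∈ sB.filter (fun x => x ∈ T), μ (n j) x * g x := by
      calc -(ε/5) ≤ -(∑ x ∈ sB.filter (fun x => x ∈ T), |μ (n j) x|) := by linarith
        _ ≤ ∑ x ∈ sB.filter (fun x => x ∈ T), μ (n j) x * g x := by
            rw [neg_le, ← Finset.sum_neg_distrib]
            exact Finset.sum_le_sum (fun x hx => by
              have := hterm2 x hx; linarith)
    rw [hBg, ← hsplit]
    have := hTbound
    linarith [e1, e2, e3]
  -- contradiction
  have htend := (htest g hgb hgz).comp hmono.tendsto_atTop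
  have := htend.eventually (eventually_lt_nhds (show (0:ℝ) < (3*ε)/5 by linarith))
  rw [eventually_atTop] at this
  obtain ⟨J, hJ⟩ := this
  have h1 := hJ J le_rfl
  have h2 := hkey J
  simp only [Function.comp] at h1
  linarith

def nuB (μ : ℕ → (Option ℕ →₀ ℝ)) (n : ℕ) : Option ℕ →₀ ℝ :=
  (2⁻¹ : ℝ) • (μ n - Finsupp.single none 1)

lemma nuB_apply_none (μ : ℕ → (Option ℕ →₀ ℝ)) (h : ∀ n, μ n none = 0) (n : ℕ) :
    nuB μ n none = -2⁻¹ := by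
  simp [nuB, h n]

lemma nuB_apply_some (μ : ℕ → (Option ℕ →₀ ℝ)) (n : ℕ) (a : ℕ) :
    nuB μ n (some a) = 2⁻¹ * μ n (some a) := by
  simp [nuB, Finsupp.single_apply]

lemma nuB_support (μ : ℕ → (Option ℕ →₀ ℝ)) (n : ℕ) :
    (nuB μ n).support ⊆ insert none (μ n).support := by
  intro x hx
  rcases x with _ | a
  · exact Finset.mem_insert_self _ _
  · refine Finset.mem_insert_of_mem (Finsupp.mem_support_iff.mpr ?_)
    intro h
    apply Finsupp.mem_support_iff.mp hx
    rw [nuB_apply_some, h, mul_zero]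

lemma none_not_mem_support (μ : Option ℕ →₀ ℝ) (h : μ none = 0) :
    none ∉ μ.support := fun hc => Finsupp.mem_support_iff.mp hc h

-- sum over insert none supp splits

lemma sum_insert_none (μ : Option ℕ →₀ ℝ) (h : μ none = 0) (G : Option ℕ → ℝ) :
    ∑ x ∈ insert none μ.support, G x = G none + ∑ x ∈ μ.support, G x :=
  Finset.sum_insert (none_not_mem_support μ h)

lemma mnorm_eq_sum (μ : Option ℕ →₀ ℝ) (hpos : ∀ x, 0 ≤ μ x) :
    mnorm μ = ∑ x ∈ μ.support, μ x := by
  unfold mnorm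
  exact Finset.sum_congr rfl (fun x _ => abs_of_nonneg (hpos x))

lemma nuB_mnorm (μ : ℕ → (Option ℕ →₀ ℝ)) (hpos : ∀ n, (∀ x, 0 ≤ μ n x) ∧ mnorm (μ n) = 1)
    (h0 : ∀ n, μ n none = 0) (n : ℕ) : mnorm (nuB μ n) = 1 := by
  unfold mnorm
  rw [sum_support_eq (nuB μ n) (insert none (μ n).support) (nuB_support μ n)
    (fun x => |nuB μ n x|) (fun x hx => by rw [hx, abs_zero])]
  rw [sum_insert_none (μ n) (h0 n)]
  rw [nuB_apply_none μ h0 n]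
  have : ∑ x ∈ (μ n).support, |nuB μ n x| = 2⁻¹ * ∑ x ∈ (μ n).support, μ n x := by
    rw [Finset.mul_sum]
    refine Finset.sum_congr rfl (fun x hx => ?_)
    rcases x with _ | a
    · exact absurd hx (none_not_mem_support _ (h0 n))
    · rw [nuB_apply_some, abs_of_nonneg (mul_nonneg (by norm_num) ((hpos n).1 _))]
  rw [this, ← mnorm_eq_sum (μ n) (hpos n).1, (hpos n).2]
  rw [abs_of_nonpos (by norm_num : (-2⁻¹:ℝ) ≤ 0)]
  norm_num

lemma nuB_mIntg (μ : ℕ → (Option ℕ →₀ ℝ)) (h0 : ∀ n, μ n none = 0) (n : ℕ)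
    (f : Option ℕ → ℝ) :
    mIntg (nuB μ n) f = 2⁻¹ * (mIntg (μ n) f - f none) := by
  unfold mIntg
  rw [sum_support_eq (nuB μ n) (insert none (μ n).support) (nuB_support μ n)
    (fun x => nuB μ n x * f x) (fun x hx => by rw [hx, zero_mul])]
  rw [sum_insert_none (μ n) (h0 n), nuB_apply_none μ h0 n]
  have : ∑ x ∈ (μ n).support, nuB μ n x * f x = 2⁻¹ * ∑ x ∈ (μ n).support, μ n x * f x := by
    rw [Finset.mul_sum]
    refine Finset.sum_congr rfl (fun x hx => ?_)
    rcases x with _ | a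
    · exact absurd hx (none_not_mem_support _ (h0 n))
    · rw [nuB_apply_some]; ring
  rw [this]; ring

lemma msetOf_le_one (μ : Option ℕ →₀ ℝ) (hpos : ∀ x, 0 ≤ μ x) (hn : mnorm μ = 1)
    (B : Set (Option ℕ)) : msetOf μ B ≤ 1 ∧ 0 ≤ msetOf μ B := by
  constructor
  · rw [← hn, mnorm]
    refine Finset.sum_le_sum (fun x _ => ?_)
    by_cases h : x ∈ B
    · rw [Set.indicator_of_mem h]; exact le_abs_self _
    · rw [Set.indicator_of_notMem h]; exact abs_nonneg _
  · refine Finset.sum_nonneg (fun x _ => ?_)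
    by_cases h : x ∈ B
    · rw [Set.indicator_of_mem h]; exact hpos x
    · rw [Set.indicator_of_notMem h]

lemma key_est (μ : Option ℕ →₀ ℝ) (hpos : ∀ x, 0 ≤ μ x) (hn : mnorm μ = 1)
    (h0 : μ none = 0) (f : Option ℕ → ℝ) (C : ℝ) (hC : ∀ x, |f x| ≤ C)
    (ε : ℝ) (hε : 0 ≤ ε) (A0 : Set ℕ) (hA0 : ∀ a ∈ A0, |f (some a) - f none| ≤ ε) :
    |mIntg μ f - f none| ≤ ε + 2 * C * (1 - msetOf μ (Option.some '' A0)) := by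
  have hsum : ∑ x ∈ μ.support, μ x = 1 := by rw [← mnorm_eq_sum μ hpos, hn]
  set B := Option.some '' A0 with hB
  have key : mIntg μ f - f none = ∑ x ∈ μ.support, μ x * (f x - f none) := by
    unfold mIntg
    rw [Finset.sum_congr rfl (fun x _ => (mul_sub (μ x) (f x) (f none)))]
    rw [Finset.sum_sub_distrib, ← Finset.sum_mul, hsum, one_mul]
  rw [key]
  calc |∑ x ∈ μ.support, μ x * (f x - f none)|
      ≤ ∑ x ∈ μ.support, |μ x * (f x - f none)| := Finset.abs_sum_le_sum_abs _ _
    _ ≤ ∑ x ∈ μ.support, (ε * Set.indicator B (fun y => μ y) x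
          + 2 * C * (μ x - Set.indicator B (fun y => μ y) x)) := by
        refine Finset.sum_le_sum (fun x hx => ?_)
        rw [abs_mul, abs_of_nonneg (hpos x)]
        by_cases h : x ∈ B
        · rw [Set.indicator_of_mem h]
          obtain ⟨a, ha, rfl⟩ := h
          have : |f (some a) - f none| ≤ ε := hA0 a ha
          nlinarith [hpos (some a)]
        · rw [Set.indicator_of_notMem h]
          have h2 : |f x - f none| ≤ 2 * C :=
            (abs_sub _ _).trans (by linarith [hC x, hC none])
          nlinarith [hpos x]
    _ = ε * msetOf μ B + 2 * C * (1 - msetOf μ B) := by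
        rw [Finset.sum_add_distrib, ← Finset.mul_sum, ← Finset.mul_sum,
          Finset.sum_sub_distrib, hsum]
        rfl
    _ ≤ ε + 2 * C * (1 - msetOf μ B) := by
        have hC0 : 0 ≤ C := le_trans (abs_nonneg _) (hC none)
        have := msetOf_le_one μ hpos hn B
        nlinarith

lemma backward_conv (F : Filter ℕ)
    (μ : ℕ → (Option ℕ →₀ ℝ)) (hpm : ∀ n, (∀ x, 0 ≤ μ n x) ∧ mnorm (μ n) = 1)
    (h0 : ∀ n, μ n none = 0)
    (hc : ∀ A ∈ F, Tendsto (fun n => msetOf (μ n) (Option.some '' A)) atTop (nhds 1))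
    (f : Option ℕ → ℝ) (hf : @Continuous (Option ℕ) ℝ (NFtop F) _ f)
    (hb : ∃ C : ℝ, ∀ x, |f x| ≤ C) :
    Tendsto (fun n => mIntg (μ n) f - f none) atTop (nhds 0) := by
  obtain ⟨C, hC⟩ := hb
  rw [Metric.tendsto_atTop]
  intro δ hδ
  have hε2 : (0:ℝ) < δ/2 := by linarith
  set A0 := {a : ℕ | |f (some a) - f none| < δ/2} with hA0
  have hA0F : A0 ∈ F := cont_nbhd f hf hε2
  have h2 : Tendsto (fun n => 2 * C * (1 - msetOf (μ n) (Option.some '' A0)))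
      atTop (nhds 0) := by
    have := ((hc A0 hA0F).const_sub 1).const_mul (2*C)
    simpa using this
  rw [Metric.tendsto_atTop] at h2
  obtain ⟨N, hN⟩ := h2 (δ/2) hε2
  refine ⟨N, fun n hn => ?_⟩
  have hb := key_est (μ n) (hpm n).1 (hpm n).2 (h0 n) f C hC (δ/2) (le_of_lt hε2)
    A0 (fun a ha => le_of_lt ha)
  have h3 := hN n hn
  rw [Real.dist_eq] at h3 ⊢
  have h4 : 2 * C * (1 - msetOf (μ n) (Option.some '' A0)) < δ/2 :=
    lt_of_le_of_lt (le_abs_self _) (by simpa using h3)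
  have h5 : |mIntg (μ n) f - f none - 0| = |mIntg (μ n) f - f none| := by ring_nf
  rw [h5]
  linarith [abs_nonneg (mIntg (μ n) f - f none), hb]

lemma decomp (μ : Option ℕ →₀ ℝ) (G : Option ℕ → ℝ) (hG : ∀ x, μ x = 0 → G x = 0) :
    ∑ x ∈ μ.support, G x = G none + ∑ x ∈ μ.support.erase none, G x := by
  by_cases h : none ∈ μ.support
  · exact (Finset.add_sum_erase _ G h).symm
  · rw [Finset.erase_eq_of_notMem h, hG none (Finsupp.notMem_support_iff.mp h), zero_add]

def cmass (μ : Option ℕ →₀ ℝ) : ℝ := mnorm μ - |μ none|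

lemma cmass_eq (μ : Option ℕ →₀ ℝ) :
    cmass μ = ∑ x ∈ μ.support.erase none, |μ x| := by
  unfold cmass mnorm
  rw [decomp μ (fun x => |μ x|) (fun x hx => by rw [hx, abs_zero])]
  ring

def nuF (μ : ℕ → (Option ℕ →₀ ℝ)) (n : ℕ) : Option ℕ →₀ ℝ :=
  if 1/4 ≤ cmass (μ n) then
    Finsupp.onFinset ((μ n).support.erase none)
      (fun x => Option.rec 0 (fun a => |μ n (some a)| / cmass (μ n)) x)
      (fun x => by
        cases x with
        | none => intro h; exact absurd rfl h
        | some a =>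
          intro h
          refine Finset.mem_erase.mpr ⟨by simp, Finsupp.mem_support_iff.mpr ?_⟩
          intro h0
          apply h
          show |μ n (some a)| / cmass (μ n) = 0
          rw [h0, abs_zero, zero_div])
  else Finsupp.single (some 0) 1

lemma nuF_pos_apply (μ : ℕ → (Option ℕ →₀ ℝ)) (n : ℕ) (h : 1/4 ≤ cmass (μ n)) :
    (∀ a, nuF μ n (some a) = |μ n (some a)| / cmass (μ n)) ∧ nuF μ n none = 0 := by
  unfold nuF
  rw [if_pos h]
  exact ⟨fun a => rfl, rfl⟩

lemma nuF_nonneg (μ : ℕ → (Option ℕ →₀ ℝ)) (n : ℕ) (hc : ∀ k, 0 ≤ cmass (μ k)) :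
    ∀ x, 0 ≤ nuF μ n x := by
  intro x
  unfold nuF
  split
  · cases x with
    | none => exact le_refl 0
    | some a => exact div_nonneg (abs_nonneg _) (hc n)
  · rw [Finsupp.single_apply]
    split <;> norm_num

lemma nuF_none (μ : ℕ → (Option ℕ →₀ ℝ)) (n : ℕ) : nuF μ n none = 0 := by
  unfold nuF
  split
  · rfl
  · rw [Finsupp.single_apply]
    split
    · next h => exact absurd h (by simp)
    · rfl

lemma nuF_support (μ : ℕ → (Option ℕ →₀ ℝ)) (n : ℕ) (h : 1/4 ≤ cmass (μ n)) :
    (nuF μ n).support ⊆ (μ n).support.erase none := by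
  unfold nuF
  rw [if_pos h]
  exact Finsupp.support_onFinset_subset

lemma nuF_mnorm (μ : ℕ → (Option ℕ →₀ ℝ)) (n : ℕ) : mnorm (nuF μ n) = 1 := by
  by_cases h : 1/4 ≤ cmass (μ n)
  · obtain ⟨hsome, hnone⟩ := nuF_pos_apply μ n h
    have hc0 : (0:ℝ) < cmass (μ n) := lt_of_lt_of_le (by norm_num) h
    unfold mnorm
    rw [sum_support_eq (nuF μ n) ((μ n).support.erase none) (nuF_support μ n h)
      (fun x => |nuF μ n x|) (fun x hx => by rw [hx, abs_zero])]
    have : ∀ x ∈ (μ n).support.erase none, |nuF μ n x| = |μ n x| / cmass (μ n) := by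
      intro x hx
      rcases x with _ | a
      · exact absurd (Finset.mem_erase.mp hx).1 (fun hne => hne rfl)
      · rw [hsome a, abs_of_nonneg (div_nonneg (abs_nonneg _) (le_of_lt hc0))]
    rw [Finset.sum_congr rfl this]
    rw [← Finset.sum_div, ← cmass_eq, div_self (ne_of_gt hc0)]
  · unfold mnorm nuF
    rw [if_neg h, Finsupp.support_single_ne_zero _ one_ne_zero]
    simp

lemma nuF_msetOf_compl (μ : ℕ → (Option ℕ →₀ ℝ)) (n : ℕ) (h : 1/4 ≤ cmass (μ n))
    (A : Set ℕ) :
    msetOf (nuF μ n) (Option.some '' Aᶜ) ≤ 4 * mnormOn (μ n) (Option.some '' Aᶜ) := by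
  obtain ⟨hsome, hnone⟩ := nuF_pos_apply μ n h
  have hc0 : (0:ℝ) < cmass (μ n) := lt_of_lt_of_le (by norm_num) h
  set B := Option.some '' Aᶜ with hB
  have h1 : msetOf (nuF μ n) B
      = ∑ x ∈ (μ n).support.erase none, Set.indicator B (fun y => nuF μ n y) x := by
    unfold msetOf
    exact sum_support_eq (nuF μ n) _ (nuF_support μ n h) _
      (fun x hx => by
        by_cases hxB : x ∈ B
        · rw [Set.indicator_of_mem hxB]; exact hx
        · rw [Set.indicator_of_notMem hxB])
  have h2 : ∀ x ∈ (μ n).support.erase none,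
      Set.indicator B (fun y => nuF μ n y) x ≤ 4 * Set.indicator B (fun y => |μ n y|) x := by
    intro x hx
    by_cases hxB : x ∈ B
    · rw [Set.indicator_of_mem hxB, Set.indicator_of_mem hxB]
      rcases x with _ | a
      · exact absurd (Finset.mem_erase.mp hx).1 (fun hne => hne rfl)
      · rw [hsome a]
        rw [div_le_iff₀ hc0]
        nlinarith [abs_nonneg (μ n (some a))]
    · rw [Set.indicator_of_notMem hxB, Set.indicator_of_notMem hxB, mul_zero]
  have h3 : ∑ x ∈ (μ n).support.erase none, Set.indicator B (fun y => |μ n y|) x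
      ≤ mnormOn (μ n) B := by
    unfold mnormOn
    rw [decomp (μ n) (Set.indicator B (fun y => |μ n y|))
      (fun x hx => by
        by_cases hxB : x ∈ B
        · rw [Set.indicator_of_mem hxB, hx, abs_zero]
        · rw [Set.indicator_of_notMem hxB])]
    have : Set.indicator B (fun y => |μ n y|) none = 0 :=
      Set.indicator_of_notMem (by simp [hB]) _
    rw [this, zero_add]
  calc msetOf (nuF μ n) B
      = ∑ x ∈ (μ n).support.erase none, Set.indicator B (fun y => nuF μ n y) x := h1
    _ ≤ ∑ x ∈ (μ n).support.erase none, 4 * Set.indicator B (fun y => |μ n y|) x :=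
        Finset.sum_le_sum h2
    _ = 4 * ∑ x ∈ (μ n).support.erase none, Set.indicator B (fun y => |μ n y|) x := by
        rw [Finset.mul_sum]
    _ ≤ 4 * mnormOn (μ n) B := by linarith [h3]

-- complement partition identity

lemma msetOf_compl_add (ν : Option ℕ →₀ ℝ) (hpos : ∀ x, 0 ≤ ν x) (h0 : ν none = 0)
    (A : Set ℕ) :
    msetOf ν (Option.some '' A) + msetOf ν (Option.some '' Aᶜ) = mnorm ν := by
  unfold msetOf mnorm
  rw [← Finset.sum_add_distrib]
  refine Finset.sum_congr rfl (fun x hx => ?_)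
  rcases x with _ | a
  · exact absurd (Finsupp.mem_support_iff.mp hx) (fun hc => hc h0)
  · have hmem : ∀ S : Set ℕ, some a ∈ Option.some '' S ↔ a ∈ S := by
      intro S; simp [Set.mem_image]
    by_cases ha : a ∈ A
    · rw [Set.indicator_of_mem ((hmem A).mpr ha),
        Set.indicator_of_notMem (fun hc => ((hmem Aᶜ).mp hc) ha),
        abs_of_nonneg (hpos _), add_zero]
    · rw [Set.indicator_of_notMem (fun hc => ha ((hmem A).mp hc)),
        Set.indicator_of_mem ((hmem Aᶜ).mpr ha),
        abs_of_nonneg (hpos _), zero_add]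

lemma msetOf_nonneg (ν : Option ℕ →₀ ℝ) (hpos : ∀ x, 0 ≤ ν x) (B : Set (Option ℕ)) :
    0 ≤ msetOf ν B := by
  refine Finset.sum_nonneg (fun x _ => ?_)
  by_cases h : x ∈ B
  · rw [Set.indicator_of_mem h]; exact hpos x
  · rw [Set.indicator_of_notMem h]


lemma cmass_nonneg (μ : Option ℕ →₀ ℝ) : 0 ≤ cmass μ := by
  rw [cmass_eq]
  exact Finset.sum_nonneg (fun x _ => abs_nonneg _)

lemma cmass_ev (μ : ℕ → (Option ℕ →₀ ℝ)) (hmn : ∀ n, mnorm (μ n) = 1)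
    (ht : Tendsto (fun n => mIntg (μ n) (fun _ => 1)) atTop (nhds 0)) :
    ∀ᶠ n in atTop, 1/4 ≤ cmass (μ n) := by
  rw [Metric.tendsto_atTop] at ht
  obtain ⟨N, hN⟩ := ht (1/2) (by norm_num)
  rw [eventually_atTop]
  refine ⟨N, fun n hn => ?_⟩
  have h1 : mIntg (μ n) (fun _ => 1) = μ n none + ∑ x ∈ (μ n).support.erase none, μ n x := by
    unfold mIntg
    have := decomp (μ n) (fun x => μ n x * 1) (fun x hx => by rw [hx, zero_mul])
    simpa using this
  have h2 : |∑ x ∈ (μ n).support.erase none, μ n x| ≤ cmass (μ n) := by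
    rw [cmass_eq]
    exact Finset.abs_sum_le_sum_abs _ _
  have h3 : |μ n none| = 1 - cmass (μ n) := by
    unfold cmass
    rw [hmn n]; ring
  have h4 : |mIntg (μ n) (fun _ => 1)| < 1/2 := by
    have := hN n hn
    rwa [Real.dist_eq, sub_zero] at this
  have h5 : |μ n none| ≤ |mIntg (μ n) (fun _ => 1)| + cmass (μ n) := by
    rw [h1]
    calc |μ n none| = |(μ n none + ∑ x ∈ (μ n).support.erase none, μ n x)
          - ∑ x ∈ (μ n).support.erase none, μ n x| := by ring_nf
      _ ≤ |μ n none + ∑ x ∈ (μ n).support.erase none, μ n x|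
          + |∑ x ∈ (μ n).support.erase none, μ n x| := abs_sub _ _
      _ ≤ |μ n none + ∑ x ∈ (μ n).support.erase none, μ n x| + cmass (μ n) := by linarith
  rw [h3] at h5
  linarith

/-- `N_F` has the BJNP iff there is a sequence of finitely supported probability measures
with supports contained in `ω` converging to `1` on every member of `F`. -/
theorem stmt2 (F : Filter ℕ) (hF : IsFreeFilter F) :
    BJNP (NFtop F) ↔
      ∃ μ : ℕ → (Option ℕ →₀ ℝ),
        (∀ n, (∀ x, 0 ≤ μ n x) ∧ mnorm (μ n) = 1) ∧
        (∀ n, μ n none = 0) ∧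
        (∀ A ∈ F, Tendsto (fun n => msetOf (μ n) (Option.some '' A)) atTop (nhds 1)) := by
  constructor
  · -- forward direction
    rintro ⟨μ, hmn, hconv⟩
    have ht : Tendsto (fun n => mIntg (μ n) (fun _ => 1)) atTop (nhds 0) :=
      hconv (fun _ => 1) (@continuous_const _ _ (NFtop F) _ _) ⟨1, fun x => by norm_num⟩
    have hev := cmass_ev μ hmn ht
    have hglide : ∀ A ∈ F, Tendsto (fun n => mnormOn (μ n) (Option.some '' Aᶜ))
        atTop (nhds 0) := by
      intro A hA
      refine gliding μ (Option.some '' Aᶜ) (fun g hgb hgz => ?_)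
      refine hconv g (cont_of hA g ?_ ?_) ⟨1, hgb⟩
      · exact hgz none (by simp)
      · intro a ha
        refine hgz (some a) ?_
        rintro ⟨b, hb, he⟩
        rw [Option.some.injEq] at he
        subst he
        exact hb ha
    refine ⟨nuF μ, fun n => ⟨nuF_nonneg μ n (fun k => cmass_nonneg (μ k)), nuF_mnorm μ n⟩,
      fun n => nuF_none μ n, ?_⟩
    intro A hA
    have hsq : Tendsto (fun n => msetOf (nuF μ n) (Option.some '' Aᶜ)) atTop (nhds 0) := by
      refine squeeze_zero' (Filter.Eventually.of_forall (fun n =>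
          msetOf_nonneg _ (nuF_nonneg μ n (fun k => cmass_nonneg (μ k))) _))
        (hev.mono (fun n hn => nuF_msetOf_compl μ n hn A)) ?_
      have := (hglide A hA).const_mul (4:ℝ)
      simpa using this
    have hid : ∀ n, msetOf (nuF μ n) (Option.some '' A)
        = 1 - msetOf (nuF μ n) (Option.some '' Aᶜ) := by
      intro n
      have := msetOf_compl_add (nuF μ n)
        (nuF_nonneg μ n (fun k => cmass_nonneg (μ k))) (nuF_none μ n) A
      rw [nuF_mnorm μ n] at this
      linarith
    have : Tendsto (fun n => 1 - msetOf (nuF μ n) (Option.some '' Aᶜ)) atTop (nhds 1) := by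
      have := (tendsto_const_nhds (x := (1:ℝ))).sub hsq
      simpa using this
    exact this.congr (fun n => (hid n).symm)
  · -- backward direction
    rintro ⟨μ, hpm, h0, hc⟩
    refine ⟨nuB μ, nuB_mnorm μ hpm h0, ?_⟩
    intro f hf hb
    have hconv := backward_conv F μ hpm h0 hc f hf hb
    have : Tendsto (fun n => 2⁻¹ * (mIntg (μ n) f - f none)) atTop (nhds 0) := by
      have := hconv.const_mul (2⁻¹ : ℝ)
      simpa using this
    exact this.congr (fun n => (nuB_mIntg μ h0 n f).symm)
end
end

section
/- Let F be a free filter on ω and (μ_n) a sequence of finitely supported signed measures on N_F. For each n let P_n = {x ∈ supp(μ_n) : μ_n({x}) > 0} and N_n = supp(μ_n) \ P_n. Then (μ_n) is a BJN-sequence on N_F if and only if the following three conditions hold simultaneously: (1) ‖μ_n‖ = 1 for every n; (2) lim_{n→∞} ‖μ_n ↾ P_n‖ = lim_{n→∞} ‖μ_n ↾ N_n‖ = 1/2; (3) lim_{n→∞} ‖μ_n ↾ (ω \ A)‖ = 0 for every A ∈ F. -/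
open Filter Topology

noncomputable section

lemma nf_isOpen_iff {α : Type*} (F : Filter α) (U : Set (Option α)) :
    IsOpen[NFtop F] U ↔ (none ∈ U → {a : α | some a ∈ U} ∈ F) := Iff.rfl

lemma nf_continuous_iff {α : Type*} (F : Filter α) (f : Option α → ℝ) :
    @Continuous (Option α) ℝ (NFtop F) _ f ↔
      Tendsto (fun a => f (some a)) F (nhds (f none)) := by
  rw [@continuous_def _ _ (NFtop F) _]
  constructor
  · intro h s hs
    obtain ⟨U, hUs, hUopen, hfU⟩ := mem_nhds_iff.mp hs
    have h2 := (nf_isOpen_iff F _).mp (h U hUopen) hfU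
    rw [mem_map]
    exact Filter.mem_of_superset h2 fun a ha => hUs ha
  · intro h s hs
    rw [nf_isOpen_iff]
    intro hnone
    exact h (hs.mem_nhds hnone)

lemma nf_cont_of_vanish {α : Type*} (F : Filter α) (f : Option α → ℝ) (A : Set α) (hA : A ∈ F)
    (h0 : f none = 0) (hvan : ∀ a ∈ A, f (some a) = 0) :
    @Continuous (Option α) ℝ (NFtop F) _ f := by
  rw [nf_continuous_iff, h0]
  have he : (fun a => f (some a)) =ᶠ[F] fun _ => 0 := eventually_of_mem hA hvan
  exact Tendsto.congr' he.symm tendsto_const_nhds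

lemma mnormOn_nonneg {X : Type*} (μ : X →₀ ℝ) (A : Set X) : 0 ≤ mnormOn μ A :=
  Finset.sum_nonneg fun x _ => Set.indicator_nonneg (fun y _ => abs_nonneg _) x

lemma mnormOn_le_mnorm {X : Type*} (μ : X →₀ ℝ) (A : Set X) : mnormOn μ A ≤ mnorm μ :=
  Finset.sum_le_sum fun x _ => Set.indicator_le_self' (fun y _ => abs_nonneg _) x

lemma mnorm_split {X : Type*} (μ : X →₀ ℝ) :
    mnormOn μ {x | 0 < μ x} + mnormOn μ {x | μ x < 0} = mnorm μ := by
  rw [mnormOn, mnormOn, mnorm, ← Finset.sum_add_distrib]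
  refine Finset.sum_congr rfl fun x hx => ?_
  have hne : μ x ≠ 0 := Finsupp.mem_support_iff.mp hx
  rcases hne.lt_or_gt with h | h
  · simp [Set.indicator_apply, Set.mem_setOf_eq, h, not_lt.mpr h.le]
  · simp [Set.indicator_apply, Set.mem_setOf_eq, h, not_lt.mpr h.le]

lemma mIntg_one {X : Type*} (μ : X →₀ ℝ) :
    mIntg μ (fun _ => 1) = mnormOn μ {x | 0 < μ x} - mnormOn μ {x | μ x < 0} := by
  rw [mIntg, mnormOn, mnormOn, ← Finset.sum_sub_distrib]
  refine Finset.sum_congr rfl fun x hx => ?_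
  have hne : μ x ≠ 0 := Finsupp.mem_support_iff.mp hx
  rcases hne.lt_or_gt with h | h
  · simp [Set.indicator_apply, Set.mem_setOf_eq, h, not_lt.mpr h.le, abs_of_neg h]
  · simp [Set.indicator_apply, Set.mem_setOf_eq, h, not_lt.mpr h.le, abs_of_pos h]

lemma mIntg_indicator_single {X : Type*} [DecidableEq X] (μ : X →₀ ℝ) (x0 : X) :
    mIntg μ (Set.indicator {x0} fun _ => (1:ℝ)) = μ x0 := by
  classical
  rw [mIntg]
  have h : ∀ x ∈ μ.support, μ x * Set.indicator {x0} (fun _ => (1:ℝ)) x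
      = if x = x0 then μ x else 0 := by
    intro x _
    by_cases hx : x = x0 <;> simp [Set.indicator_apply, hx]
  rw [Finset.sum_congr rfl h, Finset.sum_ite_eq' μ.support x0 (fun x => μ x)]
  by_cases h0 : x0 ∈ μ.support
  · simp [h0]
  · simp [h0, Finsupp.notMem_support_iff.mp h0]

lemma mnormOn_coe {X : Type*} (μ : X →₀ ℝ) (E : Finset X) :
    mnormOn μ ↑E ≤ ∑ x ∈ E, |μ x| := by
  classical
  rw [mnormOn]
  have h : ∀ x ∈ μ.support, Set.indicator (↑E) (fun y => |μ y|) x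
      = if x ∈ E then |μ x| else 0 := by
    intro x _; simp [Set.indicator_apply]
  rw [Finset.sum_congr rfl h, ← Finset.sum_filter]
  refine Finset.sum_le_sum_of_subset_of_nonneg ?_ (fun x _ _ => abs_nonneg _)
  intro x hx
  exact (Finset.mem_filter.mp hx).2

lemma mnormOn_some_image (μ : Option ℕ →₀ ℝ) (E : Finset ℕ) :
    mnormOn μ (Option.some '' ↑E) ≤ ∑ a ∈ E, |μ (some a)| := by
  classical
  have h := mnormOn_coe μ (E.image some)
  rw [Finset.coe_image] at h
  refine h.trans_eq ?_
  exact Finset.sum_image (fun a _ b _ hab => Option.some_injective _ hab)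

lemma bjn_point (F : Filter ℕ) (hF : IsFreeFilter F) (μ : ℕ → (Option ℕ →₀ ℝ))
    (hB : IsBJNSeq (NFtop F) μ) (k : ℕ) :
    Tendsto (fun n => μ n (some k)) atTop (nhds 0) := by
  classical
  have hAF : ({k}ᶜ : Set ℕ) ∈ F := hF.2 (by simp [Filter.mem_cofinite])
  have hcont : @Continuous (Option ℕ) ℝ (NFtop F) _
      (Set.indicator {some k} fun _ => (1:ℝ)) := by
    refine nf_cont_of_vanish F _ {k}ᶜ hAF ?_ ?_
    · simp
    · intro a ha
      have : (some a : Option ℕ) ≠ some k := by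
        simpa using ha
      simp [Set.indicator_apply, this]
  have hbd : ∃ C : ℝ, ∀ x, |Set.indicator {some k} (fun _ => (1:ℝ)) x| ≤ C := by
    refine ⟨1, fun x => ?_⟩
    by_cases hx : x ∈ ({some k} : Set (Option ℕ)) <;>
      simp [Set.indicator_apply, hx]
  have := hB.2 _ hcont hbd
  simpa only [mIntg_indicator_single] using this

def hump (pre : ℕ → Finset ℕ) (g : ℕ → Finset ℕ → ℕ) : ℕ × Finset ℕ → ℕ × Finset ℕ :=
  fun p => (g p.1 p.2, p.2 ∪ pre (g p.1 p.2))

def humpSeq (pre : ℕ → Finset ℕ) (g : ℕ → Finset ℕ → ℕ) : ℕ → ℕ × Finset ℕ :=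
  fun k => (hump pre g)^[k] (g 0 ∅, pre (g 0 ∅))

lemma forward3 (F : Filter ℕ) (hF : IsFreeFilter F) (μ : ℕ → (Option ℕ →₀ ℝ))
    (hB : IsBJNSeq (NFtop F) μ) (A : Set ℕ) (hA : A ∈ F) :
    Tendsto (fun n => mnormOn (μ n) (Option.some '' Aᶜ)) atTop (nhds 0) := by
  classical
  by_contra hcon
  rw [Metric.tendsto_atTop] at hcon
  push_neg at hcon
  obtain ⟨ε, hε, hfreq⟩ := hcon
  have hdist : ∀ n, dist (mnormOn (μ n) (Option.some '' Aᶜ)) 0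
      = mnormOn (μ n) (Option.some '' Aᶜ) := by
    intro n; rw [Real.dist_eq, sub_zero, abs_of_nonneg (mnormOn_nonneg _ _)]
  have key : ∀ m (E : Finset ℕ), ∃ n, m < n ∧ ε ≤ mnormOn (μ n) (Option.some '' Aᶜ) ∧
      mnormOn (μ n) (Option.some '' ↑E) < ε/4 := by
    intro m E
    have hsum : Tendsto (fun n => ∑ a ∈ E, |μ n (some a)|) atTop (nhds 0) := by
      have h0 := tendsto_finset_sum (f := fun a n => |μ n (some a)|)
        (a := fun _ => (0:ℝ)) E
        (fun a _ => by simpa using (bjn_point F hF μ hB a).abs)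
      simpa using h0
    have hev := hsum.eventually_lt_const (by linarith : (0:ℝ) < ε/4)
    obtain ⟨N, hN⟩ := eventually_atTop.mp hev
    obtain ⟨n, hn1, hn2⟩ := hfreq (max (m+1) N)
    refine ⟨n, ?_, ?_, ?_⟩
    · have := le_trans (le_max_left (m+1) N) hn1; omega
    · rw [hdist n] at hn2; exact hn2
    · exact lt_of_le_of_lt (mnormOn_some_image _ E)
        (hN n (le_trans (le_max_right _ _) hn1))
  choose g hg1 hg2 hg3 using key
  set pre : ℕ → Finset ℕ :=
    fun n => (μ n).support.preimage some (Option.some_injective ℕ).injOn with hpredef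
  set st : ℕ → ℕ × Finset ℕ := humpSeq pre g with hstdef
  set ns : ℕ → ℕ := fun k => (st k).1 with hnsdef
  have hst0 : st 0 = (g 0 ∅, pre (g 0 ∅)) := rfl
  have hstS : ∀ k, st (k+1) = (g (st k).1 (st k).2, (st k).2 ∪ pre (g (st k).1 (st k).2)) := by
    intro k
    show (hump pre g)^[k+1] _ = _
    rw [Function.iterate_succ_apply']
    rfl
  have hmono : StrictMono ns := by
    refine strictMono_nat_of_lt_succ fun k => ?_
    have : ns (k+1) = g (st k).1 (st k).2 := by show (st (k+1)).1 = _; rw [hstS k]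
    rw [this]
    exact hg1 _ _
  have hbig : ∀ k, ε ≤ mnormOn (μ (ns k)) (Option.some '' Aᶜ) := by
    intro k
    cases k with
    | zero => exact hg2 0 ∅
    | succ k =>
        have : ns (k+1) = g (st k).1 (st k).2 := by show (st (k+1)).1 = _; rw [hstS k]
        rw [this]; exact hg2 _ _
  have hsmall : ∀ k, mnormOn (μ (ns (k+1))) (Option.some '' ↑((st k).2)) < ε/4 := by
    intro k
    have : ns (k+1) = g (st k).1 (st k).2 := by show (st (k+1)).1 = _; rw [hstS k]
    rw [this]; exact hg3 _ _
  have haccmono : Monotone (fun k => (st k).2) := by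
    refine monotone_nat_of_le_succ fun k => ?_
    rw [hstS k]
    exact Finset.subset_union_left
  have hpresub : ∀ k, pre (ns k) ⊆ (st k).2 := by
    intro k
    cases k with
    | zero => exact subset_rfl
    | succ k =>
        rw [hstS k]
        have : ns (k+1) = g (st k).1 (st k).2 := by show (st (k+1)).1 = _; rw [hstS k]
        rw [this]
        exact Finset.subset_union_right
  set f : Option ℕ → ℝ := fun x =>
    if hx : x ∈ Option.some '' Aᶜ ∧ ∃ k, x ∈ (μ (ns k)).support then
      (if 0 ≤ μ (ns (Nat.find hx.2)) x then 1 else -1) else 0 with hfdef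
  have hf_none : f none = 0 := by
    rw [hfdef]
    refine dif_neg ?_
    rintro ⟨⟨a, -, ha⟩, -⟩
    exact Option.some_ne_none _ ha
  have hf_le : ∀ x, |f x| ≤ 1 := by
    intro x
    rw [hfdef]
    dsimp only
    split_ifs <;> simp
  have hf_vanish : ∀ a ∈ A, f (some a) = 0 := by
    intro a ha
    rw [hfdef]
    refine dif_neg ?_
    rintro ⟨⟨b, hb, hba⟩, -⟩
    exact hb (Option.some_injective _ hba ▸ ha)
  have hf_cont := nf_cont_of_vanish F f A hA hf_none hf_vanish
  have hest : ∀ k, ε/2 ≤ mIntg (μ (ns (k+1))) f := by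
    intro k
    have hpoint : ∀ x ∈ (μ (ns (k+1))).support,
        Set.indicator (Option.some '' Aᶜ) (fun y => |μ (ns (k+1)) y|) x
          - 2 * Set.indicator (Option.some '' ↑((st k).2)) (fun y => |μ (ns (k+1)) y|) x
          ≤ μ (ns (k+1)) x * f x := by
      intro x hx
      by_cases hG : x ∈ Option.some '' Aᶜ
      · have hcondition : x ∈ Option.some '' Aᶜ ∧ ∃ j, x ∈ (μ (ns j)).support :=
          ⟨hG, ⟨k+1, hx⟩⟩
        have hfx : f x = if 0 ≤ μ (ns (Nat.find hcondition.2)) x then 1 else -1 := by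
          rw [hfdef]; exact dif_pos hcondition
        have hj0le : Nat.find hcondition.2 ≤ k+1 := Nat.find_le hx
        by_cases hj : Nat.find hcondition.2 = k+1
        · have hval : μ (ns (k+1)) x * f x = |μ (ns (k+1)) x| := by
            rw [hfx, hj]
            split_ifs with h
            · rw [mul_one, abs_of_nonneg h]
            · rw [mul_neg_one, abs_of_neg (lt_of_not_ge h)]
          rw [hval, Set.indicator_of_mem hG]
          have := Set.indicator_nonneg (s := Option.some '' ↑((st k).2))
            (f := fun y => |μ (ns (k+1)) y|) (fun y _ => abs_nonneg _) x
          linarith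
        · have hj0 : Nat.find hcondition.2 ≤ k := by omega
          have hxj : x ∈ (μ (ns (Nat.find hcondition.2))).support :=
            Nat.find_spec hcondition.2
          obtain ⟨a, haA, rfl⟩ := id hG
          have hax : a ∈ pre (ns (Nat.find hcondition.2)) :=
            Finset.mem_preimage.mpr hxj
          have haacc : a ∈ (st k).2 := haccmono hj0 (hpresub _ hax)
          have hxGp : (some a : Option ℕ) ∈ Option.some '' ↑((st k).2) :=
            ⟨a, by exact_mod_cast haacc, rfl⟩
          rw [Set.indicator_of_mem hG, Set.indicator_of_mem hxGp]
          have h1 : -|μ (ns (k+1)) (some a)| ≤ μ (ns (k+1)) (some a) * f (some a) := by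
            rw [hfx]
            split_ifs with h
            · rw [mul_one]; exact neg_abs_le _
            · rw [mul_neg_one]
              have := le_abs_self (μ (ns (k+1)) (some a))
              linarith
          linarith
      · have hfx : f x = 0 := by
          rw [hfdef]
          exact dif_neg (fun hc => hG hc.1)
        rw [hfx, mul_zero, Set.indicator_of_notMem hG]
        have := Set.indicator_nonneg (s := Option.some '' ↑((st k).2))
          (f := fun y => |μ (ns (k+1)) y|) (fun y _ => abs_nonneg _) x
        linarith
    have hsum := Finset.sum_le_sum hpoint
    rw [Finset.sum_sub_distrib, ← Finset.mul_sum] at hsum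
    have hsum2 : mnormOn (μ (ns (k+1))) (Option.some '' Aᶜ)
        - 2 * mnormOn (μ (ns (k+1))) (Option.some '' ↑((st k).2))
        ≤ mIntg (μ (ns (k+1))) f := hsum
    have h1 := hbig (k+1)
    have h2 := hsmall k
    linarith
  have htt := hB.2 f hf_cont ⟨1, hf_le⟩
  have hmono2 : StrictMono (fun k => ns (k+1)) :=
    fun a b hab => hmono (by omega)
  have hcomp : Tendsto (fun k => mIntg (μ (ns (k+1))) f) atTop (nhds 0) :=
    htt.comp hmono2.tendsto_atTop
  obtain ⟨k, hk⟩ := (hcomp.eventually_lt_const (by linarith : (0:ℝ) < ε/2)).exists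
  exact absurd (hest k) (not_le.mpr hk)

lemma backwardBJN (F : Filter ℕ) (μ : ℕ → (Option ℕ →₀ ℝ))
    (h1 : ∀ n, mnorm (μ n) = 1)
    (hd : Tendsto (fun n => mIntg (μ n) (fun _ => 1)) atTop (nhds 0))
    (h3 : ∀ A ∈ F, Tendsto (fun n => mnormOn (μ n) (Option.some '' Aᶜ)) atTop (nhds 0)) :
    IsBJNSeq (NFtop F) μ := by
  refine ⟨h1, ?_⟩
  rintro f hf ⟨C, hC⟩
  have hC0 : 0 ≤ C := le_trans (abs_nonneg _) (hC none)
  rw [NormedAddCommGroup.tendsto_nhds_zero]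
  intro ε hε
  set c := f none with hc
  have hctend : Tendsto (fun a => f (some a)) F (nhds c) := (nf_continuous_iff F f).mp hf
  have hAmem : {a | dist (f (some a)) c < ε/3} ∈ F :=
    Metric.tendsto_nhds.mp hctend (ε/3) (by linarith)
  set A := {a : ℕ | dist (f (some a)) c < ε/3} with hAdef
  have hr := h3 A hAmem
  have hbound : ∀ n, |mIntg (μ n) f| ≤ ε/3 * mnorm (μ n)
      + (2*C) * mnormOn (μ n) (Option.some '' Aᶜ)
      + |c| * |mIntg (μ n) (fun _ => 1)| := by
    intro n
    have hsplit : mIntg (μ n) f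
        = (∑ x ∈ (μ n).support, μ n x * (f x - c)) + c * mIntg (μ n) (fun _ => 1) := by
      rw [mIntg, mIntg, Finset.mul_sum, ← Finset.sum_add_distrib]
      refine Finset.sum_congr rfl fun x _ => by ring
    have hterm : ∀ x ∈ (μ n).support, |μ n x| * |f x - c|
        ≤ ε/3 * |μ n x| + (2*C) * Set.indicator (Option.some '' Aᶜ) (fun y => |μ n y|) x := by
      intro x hx
      by_cases hxG : x ∈ Option.some '' Aᶜ
      · rw [Set.indicator_of_mem hxG]
        have hfc : |f x - c| ≤ 2*C := by
          have h1' := hC x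
          have h2' := hC none
          rw [sub_eq_add_neg]
          refine (abs_add_le _ _).trans ?_
          rw [abs_neg]
          rw [← hc] at h2'
          linarith
        have hm := mul_le_mul_of_nonneg_left hfc (abs_nonneg (μ n x))
        have hnn : 0 ≤ ε/3 * |μ n x| := by positivity
        linarith
      · rw [Set.indicator_of_notMem hxG]
        have hfc : |f x - c| ≤ ε/3 := by
          cases x with
          | none => simp [hc]; linarith
          | some a =>
              have haA : a ∈ A := by
                by_contra hna
                exact hxG ⟨a, hna, rfl⟩
              have : dist (f (some a)) c < ε/3 := haA
              rw [Real.dist_eq] at this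
              linarith
        have hm := mul_le_mul_of_nonneg_left hfc (abs_nonneg (μ n x))
        linarith
    have habs1 : |∑ x ∈ (μ n).support, μ n x * (f x - c)|
        ≤ ∑ x ∈ (μ n).support, |μ n x| * |f x - c| :=
      (Finset.abs_sum_le_sum_abs _ _).trans
        (le_of_eq (Finset.sum_congr rfl fun x _ => abs_mul _ _))
    have hsum2 : ∑ x ∈ (μ n).support, |μ n x| * |f x - c|
        ≤ ε/3 * mnorm (μ n) + (2*C) * mnormOn (μ n) (Option.some '' Aᶜ) := by
      have := Finset.sum_le_sum hterm
      rw [Finset.sum_add_distrib, ← Finset.mul_sum, ← Finset.mul_sum] at this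
      exact this
    calc |mIntg (μ n) f|
        ≤ |∑ x ∈ (μ n).support, μ n x * (f x - c)| + |c * mIntg (μ n) (fun _ => 1)| := by
          rw [hsplit]; exact abs_add_le _ _
      _ ≤ (ε/3 * mnorm (μ n) + (2*C) * mnormOn (μ n) (Option.some '' Aᶜ))
            + |c| * |mIntg (μ n) (fun _ => 1)| := by
          rw [abs_mul]
          exact add_le_add (habs1.trans hsum2) le_rfl
      _ = _ := by ring
  have t1 : Tendsto (fun n => (2*C) * mnormOn (μ n) (Option.some '' Aᶜ)) atTop (nhds 0) := by
    simpa using hr.const_mul (2*C)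
  have t2 : Tendsto (fun n => |c| * |mIntg (μ n) (fun _ => 1)|) atTop (nhds 0) := by
    simpa using hd.abs.const_mul |c|
  filter_upwards [t1.eventually_lt_const (show (0:ℝ) < ε/3 by linarith),
    t2.eventually_lt_const (show (0:ℝ) < ε/3 by linarith)] with n hn1 hn2
  have hb := hbound n
  rw [h1 n] at hb
  rw [Real.norm_eq_abs]
  linarith


/-- Characterization of BJN-sequences on `N_F`: `(μ_n)` is a BJN-sequence iff
(1) `‖μ_n‖ = 1`, (2) `‖μ_n ↾ P_n‖ → 1/2` and `‖μ_n ↾ N_n‖ → 1/2`, where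
`P_n`/`N_n` are the positive/negative parts of the support, and
(3) `‖μ_n ↾ (ω \ A)‖ → 0` for every `A ∈ F`. -/
theorem stmt3 (F : Filter ℕ) (hF : IsFreeFilter F) (μ : ℕ → (Option ℕ →₀ ℝ)) :
    IsBJNSeq (NFtop F) μ ↔
      ((∀ n, mnorm (μ n) = 1) ∧
       (Tendsto (fun n => mnormOn (μ n) {x | 0 < μ n x}) atTop (nhds (1/2)) ∧
        Tendsto (fun n => mnormOn (μ n) {x | μ n x < 0}) atTop (nhds (1/2))) ∧
       (∀ A ∈ F,
        Tendsto (fun n => mnormOn (μ n) (Option.some '' Aᶜ)) atTop (nhds 0))) := by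
  constructor
  · intro hB
    refine ⟨hB.1, ?_, fun A hA => forward3 F hF μ hB A hA⟩
    have hd0 : Tendsto (fun n => mIntg (μ n) (fun _ => 1)) atTop (nhds 0) :=
      hB.2 (fun _ => 1) (@continuous_const (Option ℕ) ℝ (NFtop F) _ 1)
        ⟨1, by simp⟩
    have hd : Tendsto (fun n => mnormOn (μ n) {x | 0 < μ n x}
        - mnormOn (μ n) {x | μ n x < 0}) atTop (nhds 0) :=
      hd0.congr (fun n => mIntg_one (μ n))
    have hsum : ∀ n, mnormOn (μ n) {x | 0 < μ n x} + mnormOn (μ n) {x | μ n x < 0} = 1 :=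
      fun n => (mnorm_split (μ n)).trans (hB.1 n)
    constructor
    · have ht := (tendsto_const_nhds (x := (1:ℝ)).add hd).div_const 2
      have ht2 := ht.congr (fun n => (by have h := hsum n; linarith :
        (1 + (mnormOn (μ n) {x | 0 < μ n x} - mnormOn (μ n) {x | μ n x < 0}))/2
          = mnormOn (μ n) {x | 0 < μ n x}))
      simpa using ht2
    · have ht := (tendsto_const_nhds (x := (1:ℝ)).sub hd).div_const 2
      have ht2 := ht.congr (fun n => (by have h := hsum n; linarith :
        (1 - (mnormOn (μ n) {x | 0 < μ n x} - mnormOn (μ n) {x | μ n x < 0}))/2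
          = mnormOn (μ n) {x | μ n x < 0}))
      simpa using ht2
  · rintro ⟨h1, ⟨h2p, h2n⟩, h3⟩
    refine backwardBJN F μ h1 ?_ h3
    have hd : Tendsto (fun n => mnormOn (μ n) {x | 0 < μ n x}
        - mnormOn (μ n) {x | μ n x < 0}) atTop (nhds (1/2 - 1/2)) := h2p.sub h2n
    have hd2 := hd.congr (fun n => (mIntg_one (μ n)).symm)
    simpa using hd2
end
end

section
/- If I is a proper density ideal on ω (i.e., I = Exh(φ) for a density submeasure φ and ω ∉ I), then the space N_{I*} associated to the dual filter I* has the bounded Josefson–Nissenzweig property. -/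
open Filter Topology

noncomputable section

/-- A submeasure on `ω`: monotone, subadditive, vanishing on `∅`, finite on singletons. -/
structure Submeasure where
  m : Set ℕ → ENNReal
  empty : m ∅ = 0
  lt_top_singleton : ∀ n : ℕ, m {n} < ⊤
  le_union : ∀ A B : Set ℕ, m A ≤ m (A ∪ B)
  union_le : ∀ A B : Set ℕ, m (A ∪ B) ≤ m A + m B

/-- Lower semicontinuity: `φ(A) = lim_n φ(A ∩ [0,n])`. -/
def Submeasure.LSC (φ : Submeasure) : Prop :=
  ∀ A : Set ℕ, Tendsto (fun n : ℕ => φ.m (A ∩ Set.Iic n)) atTop (nhds (φ.m A))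

/-- Membership in the exhaustive ideal `Exh(φ)`: `lim_n φ(A \ [0,n]) = 0`. -/
def Submeasure.ExhMem (φ : Submeasure) (A : Set ℕ) : Prop :=
  Tendsto (fun n : ℕ => φ.m (A \ Set.Iic n)) atTop (nhds 0)

/-- The value of a finitely supported nonnegative measure on `ω` on a set, in `ℝ≥0∞`. -/
def fmeasE (ν : ℕ →₀ NNReal) (A : Set ℕ) : ENNReal :=
  ∑ x ∈ ν.support, Set.indicator A (fun y => (ν y : ENNReal)) x

/-- A density submeasure: the pointwise supremum of a sequence of finitely supported
nonnegative measures on `ω` with pairwise disjoint supports. -/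
def Submeasure.IsDensity (φ : Submeasure) : Prop :=
  ∃ ν : ℕ → (ℕ →₀ NNReal),
    (∀ i j, i ≠ j → Disjoint (ν i).support (ν j).support) ∧
    ∀ A : Set ℕ, φ.m A = ⨆ n, fmeasE (ν n) A

/-- The (σ-additive, nonnegative) measure on `P(ω)` with point masses `g`. -/
def measOfWeights (g : ℕ → ENNReal) (A : Set ℕ) : ENNReal := ∑' n : ℕ, Set.indicator A g n

/-- Non-pathological submeasure: `φ(A)` is a supremum of values of dominated measures. -/
def Submeasure.NonPathological (φ : Submeasure) : Prop :=
  ∀ A : Set ℕ,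
    φ.m A = ⨆ (g : ℕ → ENNReal) (_ : ∀ B : Set ℕ, measOfWeights g B ≤ φ.m B),
      measOfWeights g A

/-! ### Auxiliary material for `stmt6` -/

lemma fmeasE_eq_filter (w : ℕ →₀ NNReal) (A : Set ℕ) [DecidablePred (· ∈ A)] :
    fmeasE w A = ∑ x ∈ w.support.filter (· ∈ A), (w x : ENNReal) := by
  rw [Finset.sum_filter, fmeasE]
  refine Finset.sum_congr rfl fun x _ => ?_
  by_cases h : x ∈ A <;> simp [h]

/-- Auxiliary function for the BJN-sequence: mass `-(1/2)` at the point at infinity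
and masses `v x` on a finite set `T`. -/
def auxFn (T : Finset ℕ) (v : ℕ → ℝ) : Option ℕ → ℝ
  | none => -(1/2)
  | some x => if x ∈ T then v x else 0

/-- The corresponding finitely supported signed measure on `Option ℕ`. -/
def auxMeas (T : Finset ℕ) (v : ℕ → ℝ) (hv : ∀ x ∈ T, v x ≠ 0) : Option ℕ →₀ ℝ where
  support := insert none (T.image Option.some)
  toFun := auxFn T v
  mem_support_toFun := by
    intro o
    cases o with
    | none => simp [auxFn]
    | some x =>
      by_cases hx : x ∈ T
      · simp [auxFn, hx, hv x hx]
      · simp [auxFn, hx]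

lemma auxMeas_support (T : Finset ℕ) (v : ℕ → ℝ) (hv : ∀ x ∈ T, v x ≠ 0) :
    (auxMeas T v hv).support = insert none (T.image Option.some) := rfl

lemma auxMeas_apply (T : Finset ℕ) (v : ℕ → ℝ) (hv : ∀ x ∈ T, v x ≠ 0) (o : Option ℕ) :
    auxMeas T v hv o = auxFn T v o := rfl

lemma none_not_mem_image_some (T : Finset ℕ) : none ∉ T.image Option.some := by simp

lemma mnorm_auxMeas (T : Finset ℕ) (v : ℕ → ℝ) (hv : ∀ x ∈ T, v x ≠ 0) :
    mnorm (auxMeas T v hv) = 1/2 + ∑ x ∈ T, |v x| := by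
  rw [mnorm, auxMeas_support, Finset.sum_insert (none_not_mem_image_some T),
    Finset.sum_image (fun x _ y _ h => Option.some_injective _ h)]
  have h1 : |auxMeas T v hv none| = 1/2 := by
    rw [auxMeas_apply]; simp [auxFn]
  rw [h1]
  congr 1
  refine Finset.sum_congr rfl fun x hx => ?_
  rw [auxMeas_apply]
  simp [auxFn, hx]

lemma mIntg_auxMeas (T : Finset ℕ) (v : ℕ → ℝ) (hv : ∀ x ∈ T, v x ≠ 0) (f : Option ℕ → ℝ) :
    mIntg (auxMeas T v hv) f = -(1/2) * f none + ∑ x ∈ T, v x * f (some x) := by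
  rw [mIntg, auxMeas_support, Finset.sum_insert (none_not_mem_image_some T),
    Finset.sum_image (fun x _ y _ h => Option.some_injective _ h)]
  have h1 : auxMeas T v hv none = -(1/2) := rfl
  rw [h1]
  congr 1
  refine Finset.sum_congr rfl fun x hx => ?_
  rw [auxMeas_apply]
  simp [auxFn, hx]

/-- If `I = Exh(φ)` is a proper density ideal, then the space `N_{I*}` associated to
its dual filter has the BJNP. -/
theorem stmt6 (φ : Submeasure) (hd : φ.IsDensity) (hproper : ¬ φ.ExhMem Set.univ)
    (F : Filter ℕ) (hdual : ∀ A : Set ℕ, A ∈ F ↔ φ.ExhMem Aᶜ) :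
    BJNP (NFtop F) := by
  classical
  obtain ⟨ν, -, hφ⟩ := hd
  -- monotonicity of φ
  have hmono : ∀ {A B : Set ℕ}, A ⊆ B → φ.m A ≤ φ.m B := by
    intro A B h
    have h2 := φ.le_union A B
    rwa [Set.union_eq_self_of_subset_left h] at h2
  set a : ℕ → ENNReal := fun j => φ.m (Set.univ \ Set.Iic j) with ha
  have hanti : Antitone a := fun i j hij =>
    hmono (Set.diff_subset_diff_right (Set.Iic_subset_Iic.mpr hij))
  have hL : Tendsto a atTop (nhds (⨅ j, a j)) := tendsto_atTop_iInf hanti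
  have hL0 : (⨅ j, a j) ≠ 0 := by
    intro h
    exact hproper (by rw [h] at hL; exact hL)
  set ε : ENNReal := min (⨅ j, a j) 1 with hεdef
  have hε0 : ε ≠ 0 := by
    have : 0 < ε := lt_min (pos_iff_ne_zero.mpr hL0) one_pos
    exact this.ne'
  have hεtop : ε ≠ ⊤ := ((min_le_right _ _).trans_lt ENNReal.one_lt_top).ne
  have hεa : ∀ j, ε ≤ a j := fun j => (min_le_left _ _).trans (iInf_le _ j)
  have hhalf : ε / 2 < ε := ENNReal.half_lt_self hε0 hεtop
  have hhalf0 : ε / 2 ≠ 0 := (ENNReal.half_pos hε0).ne'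
  have hhalftop : ε / 2 ≠ ⊤ := ((ENNReal.half_le_self).trans_lt hεtop.lt_top).ne
  have hchoice : ∀ j : ℕ, ∃ i, ε / 2 < fmeasE (ν i) (Set.univ \ Set.Iic j) := by
    intro j
    have h1 : ε / 2 < φ.m (Set.univ \ Set.Iic j) := hhalf.trans_le (hεa j)
    rw [hφ] at h1
    exact lt_iSup_iff.mp h1
  choose k hk using hchoice
  set T : ℕ → Finset ℕ := fun j => (ν (k j)).support.filter (fun x => j < x) with hT
  have hTsum : ∀ j, fmeasE (ν (k j)) (Set.univ \ Set.Iic j)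
      = ∑ x ∈ T j, ((ν (k j)) x : ENNReal) := by
    intro j
    rw [fmeasE_eq_filter]
    congr 1
    refine Finset.filter_congr fun x _ => ?_
    simp [Set.mem_diff, not_le]
  set s : ℕ → NNReal := fun j => ∑ x ∈ T j, ν (k j) x with hs
  have hsE : ∀ j, ((s j : ENNReal)) = ∑ x ∈ T j, ((ν (k j)) x : ENNReal) := by
    intro j; rw [hs]; push_cast; rfl
  have hks : ∀ j, ε / 2 < (s j : ENNReal) := fun j => by
    rw [hsE j, ← hTsum j]; exact hk j
  have hs0 : ∀ j, s j ≠ 0 := by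
    intro j h
    have := hks j
    rw [h] at this
    simp at this
  have hsR : ∀ j, (0 : ℝ) < s j := fun j =>
    NNReal.coe_pos.mpr (pos_iff_ne_zero.mpr (hs0 j))
  set εr : ℝ := (ε / 2).toReal with hεr
  have hεr0 : 0 < εr := ENNReal.toReal_pos hhalf0 hhalftop
  have hεrs : ∀ j, εr < (s j : ℝ) := by
    intro j
    have h2 := (ENNReal.toReal_lt_toReal hhalftop ENNReal.coe_ne_top).mpr (hks j)
    rw [ENNReal.coe_toReal] at h2
    exact h2
  -- coercion of the total mass
  have hcoe_sum : ∀ j, ∑ x ∈ T j, ((ν (k j) x : ℝ)) = (s j : ℝ) := by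
    intro j; rw [hs]; push_cast; rfl
  -- the weights are nonzero on T j
  have hv : ∀ j, ∀ x ∈ T j, (ν (k j) x : ℝ) / (2 * (s j : ℝ)) ≠ 0 := by
    intro j x hx
    have hν : ν (k j) x ≠ 0 := Finsupp.mem_support_iff.mp (Finset.mem_filter.mp hx).1
    have h1 : (0 : ℝ) < ν (k j) x := NNReal.coe_pos.mpr (pos_iff_ne_zero.mpr hν)
    exact (div_pos h1 (by have := hsR j; linarith)).ne'
  have hq0 : ∀ j x, 0 ≤ (ν (k j) x : ℝ) / (2 * (s j : ℝ)) := by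
    intro j x
    have := hsR j
    positivity
  have hsum_half : ∀ j, ∑ x ∈ T j, (ν (k j) x : ℝ) / (2 * (s j : ℝ)) = 1/2 := by
    intro j
    rw [← Finset.sum_div, hcoe_sum j]
    rw [div_eq_div_iff (by have := hsR j; positivity) two_ne_zero]
    ring
  refine ⟨fun j => auxMeas (T j) (fun x => (ν (k j) x : ℝ) / (2 * (s j : ℝ))) (hv j), ?_, ?_⟩
  · -- norms are 1
    intro j
    rw [mnorm_auxMeas]
    have : ∑ x ∈ T j, |(ν (k j) x : ℝ) / (2 * (s j : ℝ))|
        = ∑ x ∈ T j, (ν (k j) x : ℝ) / (2 * (s j : ℝ)) :=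
      Finset.sum_congr rfl fun x _ => abs_of_nonneg (hq0 j x)
    rw [this, hsum_half j]
    norm_num
  · -- integrals tend to 0
    intro f hf hbdd
    obtain ⟨M0, hM0⟩ := hbdd
    have hM0nonneg : 0 ≤ M0 := (abs_nonneg _).trans (hM0 none)
    rw [Metric.tendsto_atTop]
    intro δ hδ
    -- the open neighborhood of the point at infinity given by continuity
    set V : Set (Option ℕ) := f ⁻¹' Metric.ball (f none) δ with hVdef
    have hVopen : IsOpen[NFtop F] V := by
      exact @Continuous.isOpen_preimage _ _ (NFtop F) _ f hf _ Metric.isOpen_ball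
    have hnoneV : none ∈ V := by
      simp [hVdef, Metric.mem_ball, dist_self, hδ]
    set B : Set ℕ := {x : ℕ | some x ∈ V} with hBdef
    have hB : B ∈ F := hVopen hnoneV
    have ht : Tendsto (fun n => φ.m (Bᶜ \ Set.Iic n)) atTop (nhds 0) := (hdual B).mp hB
    set c : ℝ := δ / (2 * M0 + 1) with hc
    have hc0 : 0 < c := div_pos hδ (by linarith)
    set η : ENNReal := ENNReal.ofReal (εr * c) with hη
    have hη0 : 0 < η := ENNReal.ofReal_pos.mpr (by positivity)
    obtain ⟨N, hN⟩ := eventually_atTop.mp (ht.eventually_lt_const hη0)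
    refine ⟨N, fun j hj => ?_⟩
    rw [Real.dist_eq, sub_zero]
    -- the mass outside B
    set numN : NNReal := ∑ x ∈ (T j).filter (fun x => x ∉ B), ν (k j) x with hnumN
    have hnum : (numN : ENNReal) = fmeasE (ν (k j)) (Bᶜ \ Set.Iic j) := by
      rw [fmeasE_eq_filter, hnumN]
      push_cast
      rw [hT, Finset.filter_filter]
      congr 1
      refine Finset.filter_congr fun x _ => ?_
      simp only [Set.mem_diff, Set.mem_compl_iff, Set.mem_Iic, not_le]
      tauto
    have hnumlt : (numN : ℝ) < εr * c := by
      have h1 : (numN : ENNReal) ≤ φ.m (Bᶜ \ Set.Iic j) := by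
        rw [hnum, hφ]
        exact le_iSup (fun i => fmeasE (ν i) (Bᶜ \ Set.Iic j)) (k j)
      have h2 : (numN : ENNReal) < η := h1.trans_lt (hN j hj)
      rw [hη] at h2
      have h3 := (ENNReal.lt_ofReal_iff_toReal_lt ENNReal.coe_ne_top).mp h2
      simpa using h3
    -- the tail mass θ'
    have hθsum : ∑ x ∈ (T j).filter (fun x => x ∉ B), (ν (k j) x : ℝ) / (2 * (s j : ℝ))
        = (numN : ℝ) / (2 * (s j : ℝ)) := by
      rw [← Finset.sum_div, hnumN]
      push_cast
      rfl
    have hθlt : (numN : ℝ) / (2 * (s j : ℝ)) < c / 2 := by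
      rw [div_lt_iff₀ (by have := hsR j; linarith)]
      have h4 : εr * c < c / 2 * (2 * (s j : ℝ)) := by
        have := hεrs j
        nlinarith
      linarith [hnumlt]
    have hθ0 : 0 ≤ (numN : ℝ) / (2 * (s j : ℝ)) := by
      have := hsR j; positivity
    -- rewrite the integral
    have hIntg : mIntg (auxMeas (T j) (fun x => (ν (k j) x : ℝ) / (2 * (s j : ℝ))) (hv j)) f
        = ∑ x ∈ T j, (ν (k j) x : ℝ) / (2 * (s j : ℝ)) * (f (some x) - f none) := by
      rw [mIntg_auxMeas]
      simp only [mul_sub]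
      rw [Finset.sum_sub_distrib, ← Finset.sum_mul, hsum_half j]
      ring
    rw [hIntg]
    -- the main estimate
    calc |∑ x ∈ T j, (ν (k j) x : ℝ) / (2 * (s j : ℝ)) * (f (some x) - f none)|
        ≤ ∑ x ∈ T j, |(ν (k j) x : ℝ) / (2 * (s j : ℝ)) * (f (some x) - f none)| :=
          Finset.abs_sum_le_sum_abs _ _
      _ = ∑ x ∈ T j, (ν (k j) x : ℝ) / (2 * (s j : ℝ)) * |f (some x) - f none| := by
          refine Finset.sum_congr rfl fun x _ => ?_
          rw [abs_mul, abs_of_nonneg (hq0 j x)]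
      _ ≤ ∑ x ∈ T j, (if x ∈ B then (ν (k j) x : ℝ) / (2 * (s j : ℝ)) * δ
            else (ν (k j) x : ℝ) / (2 * (s j : ℝ)) * (2 * M0)) := by
          refine Finset.sum_le_sum fun x _ => ?_
          by_cases hxB : x ∈ B
          · rw [if_pos hxB]
            refine mul_le_mul_of_nonneg_left ?_ (hq0 j x)
            have : some x ∈ V := hxB
            have := Metric.mem_ball.mp this
            rw [Real.dist_eq] at this
            exact this.le
          · rw [if_neg hxB]
            refine mul_le_mul_of_nonneg_left ?_ (hq0 j x)
            calc |f (some x) - f none| ≤ |f (some x)| + |f none| := abs_sub _ _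
              _ ≤ M0 + M0 := add_le_add (hM0 _) (hM0 _)
              _ = 2 * M0 := by ring
      _ = δ * ∑ x ∈ (T j).filter (fun x => x ∈ B), (ν (k j) x : ℝ) / (2 * (s j : ℝ))
            + 2 * M0 * ∑ x ∈ (T j).filter (fun x => x ∉ B),
                (ν (k j) x : ℝ) / (2 * (s j : ℝ)) := by
          rw [Finset.sum_ite]
          congr 1
          · rw [Finset.mul_sum]; exact Finset.sum_congr rfl fun x _ => mul_comm _ _
          · rw [Finset.mul_sum]; exact Finset.sum_congr rfl fun x _ => mul_comm _ _
      _ ≤ δ * (1/2) + 2 * M0 * ((numN : ℝ) / (2 * (s j : ℝ))) := by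
          refine add_le_add ?_ ?_
          · refine mul_le_mul_of_nonneg_left ?_ hδ.le
            rw [← hsum_half j]
            exact Finset.sum_le_sum_of_subset_of_nonneg (Finset.filter_subset _ _)
              fun x _ _ => hq0 j x
          · rw [hθsum]
      _ < δ := by
          have h5 : 2 * M0 * ((numN : ℝ) / (2 * (s j : ℝ)))
              ≤ (2 * M0 + 1) * ((numN : ℝ) / (2 * (s j : ℝ))) := by nlinarith
          have h6 : (2 * M0 + 1) * ((numN : ℝ) / (2 * (s j : ℝ)))
              < (2 * M0 + 1) * (c / 2) := by
            exact mul_lt_mul_of_pos_left hθlt (by linarith)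
          have h7 : (2 * M0 + 1) * (c / 2) = δ / 2 := by
            rw [hc]; field_simp
          linarith
end
end
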